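/- arXiv:2512.02663 — 10 statements merged into one kernel-verified Lean document; each statement's English description precedes it below -/
import Mathlib

section
/- There exist universal constants 0 < c < C such that the following holds. For each pair of integers n ≥ 2 and k ≥ 1, let T(n,k) = Z_1 + ... + Z_k where Z_1, ..., Z_k are i.i.d. copies of Z(n). Then for any sequences of integers (n_j), (k_j) with n_j ≥ 2, k_j ≥ 1 and n_j + k_j → ∞, the probability P( c · k_j · ln(n_j) ≤ T(n_j,k_j) ≤ C · k_j · ln(n_j) ) tends to 1 as j → ∞. -/
open MeasureTheory ProbabilityTheory Filter

/-- The Markov chain modeling the CD-P heuristic (unbounded reach), driven by a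
sequence `U` of i.i.d. uniform random variables on `[0,1]`: it starts at `n`, and from a
state `m ≥ 1` it jumps to a uniformly chosen state in `{0, …, m-1}` (state `0` is absorbing). -/
noncomputable def chainR {Ω : Type*} (n : ℕ) (U : ℕ → Ω → ℝ) : ℕ → Ω → ℕ
  | 0 => fun _ => n
  | (t + 1) => fun ω => ⌊(chainR n U t ω : ℝ) * U (t + 1) ω⌋₊

/-- `hitZ n U` is the hitting time of `0` for the chain `chainR n U`. -/
noncomputable def hitZ {Ω : Type*} (n : ℕ) (U : ℕ → Ω → ℝ) (ω : Ω) : ℕ :=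
  sInf {t | chainR n U t ω = 0}

/-- `sumZ n k U ω = Z₁ + ⋯ + Z_k`, a sum of `k` i.i.d. copies of `Z(n)`, where the `i`-th copy
is driven by the `i`-th row of the doubly-indexed i.i.d. uniform family `U`. -/
noncomputable def sumZ {Ω : Type*} (n k : ℕ) (U : ℕ × ℕ → Ω → ℝ) (ω : Ω) : ℕ :=
  ∑ i ∈ Finset.range k, hitZ n (fun t => U (i, t)) ω

/-!
Pathwise, after `t` steps the chain is within `t` of `n U₁ ⋯ U_t`, so `Z(n)` is essentially
the first time a product of independent uniforms drops below `1 / n`, which happens after about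
`ln n` steps since `E[-ln U] = 1`. Both tails of `T = Z₁ + ⋯ + Z_k` are Chernoff bounds over the
`k` independent rows: `exp (-Z)` and `(4/3) ^ Z` are dominated by explicit functions of such
products, whose means factor by independence. This gives
`P(T ∉ [k ln n / 40, 20 k ln n]) ≤ 2 n ^ (-k / 40)`, and `n ^ k ≥ (n + k) / 2` makes it vanish.
-/

open Real
open Set (Icc Ico Ioo)
open Finset (range)
open scoped ENNReal

section Chain

variable {Ω : Type*} {n : ℕ} {U : ℕ → Ω → ℝ} {ω : Ω} {t t' : ℕ}

@[simp] lemma chainR_zero : chainR n U 0 ω = n := rfl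

lemma chainR_succ : chainR n U (t + 1) ω = ⌊(chainR n U t ω : ℝ) * U (t + 1) ω⌋₊ := rfl

lemma chainR_le_mul_prod (hU : ∀ t, 0 ≤ U t ω) (t : ℕ) :
    (chainR n U t ω : ℝ) ≤ n * ∏ s ∈ range t, U (s + 1) ω := by
  induction t with
  | zero => simp
  | succ t ih =>
    calc (chainR n U (t + 1) ω : ℝ) ≤ chainR n U t ω * U (t + 1) ω :=
          Nat.floor_le (mul_nonneg (Nat.cast_nonneg _) (hU _))
      _ ≤ (n * ∏ s ∈ range t, U (s + 1) ω) * U (t + 1) ω := by gcongr; exact hU _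
      _ = n * ∏ s ∈ range (t + 1), U (s + 1) ω := by rw [Finset.prod_range_succ, mul_assoc]

/-- Each floor loses less than one unit, and a loss, once made, only shrinks under the later
factors `U ≤ 1`. -/
lemma mul_prod_sub_le_chainR (hU : ∀ t, U t ω ∈ Icc 0 1) (t : ℕ) :
    n * ∏ s ∈ range t, U (s + 1) ω - t ≤ chainR n U t ω := by
  induction t with
  | zero => simp
  | succ t ih =>
    obtain ⟨hu₀, hu₁⟩ := hU (t + 1)
    have hfloor := Nat.sub_one_lt_floor ((chainR n U t ω : ℝ) * U (t + 1) ω)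
    rw [Finset.prod_range_succ, chainR_succ]
    push_cast
    nlinarith

lemma chainR_eq_zero_of_le (h : chainR n U t ω = 0) (htt' : t ≤ t') : chainR n U t' ω = 0 := by
  induction t', htt' using Nat.le_induction with
  | base => exact h
  | succ t' _ ih => simp [chainR_succ, ih]

lemma chainR_succ_le_sub_one (hu : U (t + 1) ω ∈ Ico 0 1) :
    chainR n U (t + 1) ω ≤ chainR n U t ω - 1 := by
  rcases Nat.eq_zero_or_pos (chainR n U t ω) with h | h
  · simp [chainR_succ, h]
  · have hlt : ⌊(chainR n U t ω : ℝ) * U (t + 1) ω⌋₊ < chainR n U t ω :=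
      (Nat.floor_lt (mul_nonneg (Nat.cast_nonneg _) hu.1)).2
        (mul_lt_of_lt_one_right (by exact_mod_cast h) hu.2)
    rw [chainR_succ]
    omega

lemma chainR_le_sub (hU : ∀ t, U t ω ∈ Ico 0 1) (t : ℕ) : chainR n U t ω ≤ n - t := by
  induction t with
  | zero => simp
  | succ t ih => have := chainR_succ_le_sub_one (n := n) (hU (t + 1)); omega

lemma chainR_self_eq_zero (hU : ∀ t, U t ω ∈ Ico 0 1) : chainR n U n ω = 0 := by
  simpa using chainR_le_sub (n := n) hU n

lemma chainR_hitZ (hU : ∀ t, U t ω ∈ Ico 0 1) : chainR n U (hitZ n U ω) ω = 0 :=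
  Nat.sInf_mem (s := {t | chainR n U t ω = 0}) ⟨n, chainR_self_eq_zero hU⟩

lemma hitZ_le (hU : ∀ t, U t ω ∈ Ico 0 1) : hitZ n U ω ≤ n :=
  Nat.sInf_le (chainR_self_eq_zero hU)

lemma lt_hitZ_iff (hU : ∀ t, U t ω ∈ Ico 0 1) : t < hitZ n U ω ↔ chainR n U t ω ≠ 0 :=
  ⟨fun ht => Nat.notMem_of_lt_sInf (s := {t | chainR n U t ω = 0}) ht, fun h => by
    by_contra ht
    exact h (chainR_eq_zero_of_le (chainR_hitZ hU) (not_lt.1 ht))⟩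

lemma hitZ_pos (hn : 0 < n) (hU : ∀ t, U t ω ∈ Ico 0 1) : 0 < hitZ n U ω :=
  (lt_hitZ_iff hU).2 hn.ne'

lemma one_le_mul_prod_of_lt_hitZ (hU : ∀ t, U t ω ∈ Ico 0 1) (ht : t < hitZ n U ω) :
    1 ≤ n * ∏ s ∈ range t, U (s + 1) ω := by
  have h := (lt_hitZ_iff hU).1 ht
  calc (1 : ℝ) ≤ chainR n U t ω := by exact_mod_cast Nat.one_le_iff_ne_zero.2 h
    _ ≤ _ := chainR_le_mul_prod (fun t => (hU t).1) t

lemma mul_prod_le_of_hitZ_le (hU : ∀ t, U t ω ∈ Ico 0 1) (ht : hitZ n U ω ≤ t) :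
    n * ∏ s ∈ range t, U (s + 1) ω ≤ t := by
  have h := mul_prod_sub_le_chainR (n := n) (fun t => Set.Ico_subset_Icc_self (hU t)) t
  rw [chainR_eq_zero_of_le (chainR_hitZ hU) ht] at h
  simpa using h

end Chain

section Majorants

variable {Ω : Type*} {n : ℕ} {U : ℕ → Ω → ℝ} {ω : Ω}

/-- Dominates `exp (-Z)`: the constant covers `Z > t₀`, and the product covers `Z ≤ t₀`,
where `n ∏ U ≤ t₀`. -/
noncomputable def lowerMajorant (n t₀ : ℕ) (x : ℕ → ℝ) : ℝ≥0∞ :=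
  ENNReal.ofReal (exp (-t₀)) +
    ENNReal.ofReal √(t₀ / n) * ∏ s ∈ range t₀, ENNReal.ofReal (x (s + 1) ^ (-(1 / 2) : ℝ))

/-- Dominates `(4/3) ^ Z` through its term `t = Z - 1`, where `n ∏ U ≥ 1`. -/
noncomputable def upperMajorant (n : ℕ) (x : ℕ → ℝ) : ℝ≥0∞ :=
  ∑ t ∈ range n,
    ENNReal.ofReal ((4 / 3) ^ (t + 1) * √n) *
      ∏ s ∈ range t, ENNReal.ofReal (x (s + 1) ^ (1 / 2 : ℝ))

lemma exp_neg_hitZ_le_lowerMajorant (hn : 0 < n) (hU : ∀ t, U t ω ∈ Ioo 0 1) (t₀ : ℕ) :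
    ENNReal.ofReal (exp (-hitZ n U ω)) ≤ lowerMajorant n t₀ (U · ω) := by
  have hU' : ∀ t, U t ω ∈ Ico 0 1 := fun t => Set.Ioo_subset_Ico_self (hU t)
  rcases lt_or_ge t₀ (hitZ n U ω) with ht | ht
  · refine le_add_right (ENNReal.ofReal_le_ofReal (exp_le_exp.2 ?_))
    exact neg_le_neg (by exact_mod_cast ht.le)
  · set p := ∏ s ∈ range t₀, U (s + 1) ω
    have hp : 0 < p := Finset.prod_pos fun s _ => (hU (s + 1)).1
    have hnp : n * p ≤ t₀ := mul_prod_le_of_hitZ_le hU' ht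
    have hprod : ∏ s ∈ range t₀, ENNReal.ofReal (U (s + 1) ω ^ (-(1 / 2) : ℝ)) =
        ENNReal.ofReal (p ^ (-(1 / 2) : ℝ)) := by
      rw [← ENNReal.ofReal_prod_of_nonneg fun s _ => rpow_nonneg (hU (s + 1)).1.le _,
        finsetProd_rpow _ _ fun s _ => (hU (s + 1)).1.le]
    have hone : 1 ≤ √(t₀ / n) * p ^ (-(1 / 2) : ℝ) := by
      rw [rpow_neg hp.le, ← sqrt_eq_rpow, ← div_eq_mul_inv, ← sqrt_div' _ hp.le, div_div]
      exact one_le_sqrt.2 ((one_le_div (by positivity)).2 hnp)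
    refine le_add_left ?_
    calc ENNReal.ofReal (exp (-hitZ n U ω)) ≤ 1 :=
          ENNReal.ofReal_le_one.2 (exp_le_one_iff.2 (by simp))
      _ ≤ ENNReal.ofReal (√(t₀ / n) * p ^ (-(1 / 2) : ℝ)) := ENNReal.one_le_ofReal.2 hone
      _ = _ := by rw [ENNReal.ofReal_mul (sqrt_nonneg _), hprod]

lemma pow_hitZ_le_upperMajorant (hn : 0 < n) (hU : ∀ t, U t ω ∈ Ico 0 1) :
    ENNReal.ofReal ((4 / 3) ^ hitZ n U ω) ≤ upperMajorant n (U · ω) := by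
  have hZ := hitZ_pos hn hU
  set t := hitZ n U ω - 1
  have ht : t + 1 = hitZ n U ω := by omega
  have hnp := one_le_mul_prod_of_lt_hitZ (n := n) (t := t) hU (by omega)
  have hroot : 1 ≤ √n * ∏ s ∈ range t, U (s + 1) ω ^ (1 / 2 : ℝ) := by
    rw [finsetProd_rpow _ _ fun s _ => (hU (s + 1)).1, ← sqrt_eq_rpow, ← sqrt_mul (by positivity)]
    exact one_le_sqrt.2 hnp
  refine le_trans ?_ (Finset.single_le_sum (fun _ _ => bot_le)
    (Finset.mem_range.2 (show t < n by have := hitZ_le (n := n) hU; omega)))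
  rw [← ENNReal.ofReal_prod_of_nonneg fun s _ => rpow_nonneg (hU (s + 1)).1 _,
    ← ENNReal.ofReal_mul (by positivity), ht, mul_assoc]
  exact ENNReal.ofReal_le_ofReal (le_mul_of_one_le_right (by positivity) hroot)

end Majorants

section Independence

variable {Ω : Type*} {mΩ : MeasurableSpace Ω} {P : Measure Ω}

lemma ProbabilityTheory.iIndepFun.curry {ι κ 𝓧 : Type*} [MeasurableSpace 𝓧]
    {X : ι × κ → Ω → 𝓧} (mX : ∀ p, Measurable (X p)) (hX : iIndepFun X P) :
    iIndepFun (fun i ω j => X (i, j) ω) P := by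
  have := hX.isProbabilityMeasure
  have _ p := Measure.isProbabilityMeasure_map (μ := P) (mX p).aemeasurable
  have hrow i : P.map (fun ω j => X (i, j) ω) = Measure.infinitePi fun j => P.map (X (i, j)) :=
    (hX.precomp (Prod.mk_right_injective i)).map_fun_eq_infinitePi_map fun j => mX _
  rw [iIndepFun_iff_map_fun_eq_infinitePi_map fun i => by fun_prop,
    show (fun ω i j => X (i, j) ω) = MeasurableEquiv.curry ι κ 𝓧 ∘ fun ω p => X p ω from rfl,
    ← Measure.map_map (by fun_prop) (by fun_prop), hX.map_fun_eq_infinitePi_map mX]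
  simp_rw [hrow]
  exact Measure.infinitePi_map_curry fun i j => P.map (X (i, j))

lemma lintegral_prod_rows {ι κ 𝓧 : Type*} [MeasurableSpace 𝓧] {X : ι × κ → Ω → 𝓧}
    (mX : ∀ p, Measurable (X p)) (hX : iIndepFun X P) {F : (κ → 𝓧) → ℝ≥0∞}
    (hF : Measurable F) (s : Finset ι) :
    ∫⁻ ω, ∏ i ∈ s, F (fun j => X (i, j) ω) ∂P = ∏ i ∈ s, ∫⁻ ω, F (fun j => X (i, j) ω) ∂P :=
  lintegral_prod_eq_prod_lintegral_of_indepFun s _ ((hX.curry mX).comp (fun _ => F) fun _ => hF)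
    fun i => hF.comp (measurable_pi_lambda _ fun j => mX (i, j))

lemma lintegral_prod_range_comp {V : ℕ → Ω → ℝ} (mV : ∀ s, Measurable (V s))
    (hV : iIndepFun V P) {μ : Measure ℝ} (hlaw : ∀ s, P.map (V s) = μ) {φ : ℝ → ℝ≥0∞}
    (hφ : Measurable φ) (t : ℕ) :
    ∫⁻ ω, ∏ s ∈ range t, φ (V s ω) ∂P = (∫⁻ x, φ x ∂μ) ^ t := by
  rw [lintegral_prod_eq_prod_lintegral_of_indepFun (X := fun s ω => φ (V s ω)) _
    (hV.comp (fun _ => φ) fun _ => hφ) fun s => hφ.comp (mV s)]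
  simp_rw [← lintegral_map hφ (mV _), hlaw, Finset.prod_const, Finset.card_range]

lemma measure_le_pow_div_of_ae_le_prod {ι κ 𝓧 : Type*} [MeasurableSpace 𝓧]
    {X : ι × κ → Ω → 𝓧} (mX : ∀ p, Measurable (X p)) (hX : iIndepFun X P)
    {F : (κ → 𝓧) → ℝ≥0∞} (hF : Measurable F) {s : Finset ι} {ρ : ℝ≥0∞}
    (hρ : ∀ i ∈ s, ∫⁻ ω, F (fun j => X (i, j) ω) ∂P ≤ ρ) {ε : ℝ≥0∞} (hε₀ : ε ≠ 0) (hε : ε ≠ ∞)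
    {A : Set Ω} (hA : ∀ᵐ ω ∂P, ω ∈ A → ε ≤ ∏ i ∈ s, F (fun j => X (i, j) ω)) :
    P A ≤ ρ ^ s.card / ε :=
  calc P A ≤ P {ω | ε ≤ ∏ i ∈ s, F (fun j => X (i, j) ω)} := measure_mono_ae hA
    _ ≤ (∫⁻ ω, ∏ i ∈ s, F (fun j => X (i, j) ω) ∂P) / ε :=
      meas_ge_le_lintegral_div (Finset.measurable_prod _ fun i _ =>
        hF.comp (measurable_pi_lambda _ fun j => mX (i, j))).aemeasurable hε₀ hε
    _ ≤ ρ ^ s.card / ε := by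
      rw [lintegral_prod_rows mX hX hF]
      exact ENNReal.div_le_div_right (Finset.prod_le_pow_card _ _ _ hρ) _

end Independence

lemma lintegral_Icc_ofReal_rpow {a : ℝ} (ha : -1 < a) :
    ∫⁻ x in Icc (0 : ℝ) 1, ENNReal.ofReal (x ^ a) = ENNReal.ofReal (1 / (a + 1)) := by
  have hint : IntegrableOn (fun x : ℝ => x ^ a) (Set.Ioc 0 1) :=
    (intervalIntegrable_iff_integrableOn_Ioc_of_le zero_le_one).1
      (intervalIntegral.intervalIntegrable_rpow' ha)
  rw [← Measure.restrict_congr_set Ioc_ae_eq_Icc, ← ofReal_integral_eq_lintegral_ofReal hint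
    ((ae_restrict_iff' measurableSet_Ioc).2 (.of_forall fun x hx => rpow_nonneg hx.1.le a)),
    ← intervalIntegral.integral_of_le zero_le_one, integral_rpow (Or.inl ha)]
  simp [(by linarith : a + 1 ≠ 0)]

section UniformRow

variable {Ω : Type*} {mΩ : MeasurableSpace Ω} {P : Measure Ω} {V : ℕ → Ω → ℝ}

lemma lintegral_prod_rpow_uniform (mV : ∀ t, Measurable (V t)) (hV : iIndepFun V P)
    (hlaw : ∀ t, P.map (V t) = volume.restrict (Icc 0 1)) {a : ℝ} (ha : -1 < a) (t : ℕ) :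
    ∫⁻ ω, ∏ s ∈ range t, ENNReal.ofReal (V (s + 1) ω ^ a) ∂P =
      ENNReal.ofReal (1 / (a + 1)) ^ t := by
  rw [lintegral_prod_range_comp (V := fun s => V (s + 1)) (fun s => mV _)
    (hV.precomp (add_left_injective 1)) (fun s => hlaw _) (φ := fun x => ENNReal.ofReal (x ^ a))
    (by fun_prop),
    lintegral_Icc_ofReal_rpow ha]

lemma lintegral_lowerMajorant (mV : ∀ t, Measurable (V t)) (hV : iIndepFun V P)
    (hlaw : ∀ t, P.map (V t) = volume.restrict (Icc 0 1)) (n t₀ : ℕ) :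
    ∫⁻ ω, lowerMajorant n t₀ (V · ω) ∂P = ENNReal.ofReal (exp (-t₀) + √(t₀ / n) * 2 ^ t₀) := by
  have := hV.isProbabilityMeasure
  unfold lowerMajorant
  beta_reduce
  rw [lintegral_add_left measurable_const, lintegral_const_mul' _ _ ENNReal.ofReal_ne_top,
    lintegral_prod_rpow_uniform mV hV hlaw (by norm_num), lintegral_const, measure_univ, mul_one,
    ENNReal.ofReal_add (exp_nonneg _) (by positivity), ENNReal.ofReal_mul (sqrt_nonneg _),
    ENNReal.ofReal_pow zero_le_two]
  norm_num

lemma lintegral_upperMajorant_le (mV : ∀ t, Measurable (V t)) (hV : iIndepFun V P)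
    (hlaw : ∀ t, P.map (V t) = volume.restrict (Icc 0 1)) (n : ℕ) :
    ∫⁻ ω, upperMajorant n (V · ω) ∂P ≤ ENNReal.ofReal (12 * √n) := by
  unfold upperMajorant
  beta_reduce
  rw [lintegral_finsetSum _ fun t _ => by fun_prop]
  simp_rw [lintegral_const_mul' _ _ ENNReal.ofReal_ne_top,
    lintegral_prod_rpow_uniform mV hV hlaw (by norm_num : (-1 : ℝ) < 1 / 2),
    ← ENNReal.ofReal_pow (by norm_num : (0 : ℝ) ≤ 1 / (1 / 2 + 1)),
    ← ENNReal.ofReal_mul (by positivity : (0 : ℝ) ≤ (4 / 3) ^ _ * √n)]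
  rw [← ENNReal.ofReal_sum_of_nonneg fun t _ => by positivity]
  refine ENNReal.ofReal_le_ofReal ?_
  have hgeom : ∑ t ∈ range n, (8 / 9 : ℝ) ^ t ≤ 9 := by
    rw [Finset.range_eq_Ico]
    exact (geom_sum_Ico_le_of_lt_one (by norm_num) (by norm_num)).trans_eq (by norm_num)
  calc ∑ t ∈ range n, (4 / 3 : ℝ) ^ (t + 1) * √n * (1 / (1 / 2 + 1)) ^ t
      = 4 / 3 * √n * ∑ t ∈ range n, (8 / 9 : ℝ) ^ t := by
        rw [Finset.mul_sum]
        refine Finset.sum_congr rfl fun t _ => ?_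
        rw [show (8 / 9 : ℝ) = 4 / 3 * (1 / (1 / 2 + 1)) by norm_num, mul_pow, pow_succ]
        ring
    _ ≤ 4 / 3 * √n * 9 := by gcongr
    _ = 12 * √n := by ring

end UniformRow

lemma exp_neg_floor_add_sqrt_mul_two_pow_le {x : ℝ} (hx : 0 < x) (hL : 40 < log x) :
    exp (-⌊log x / 8⌋₊) + √(⌊log x / 8⌋₊ / x) * 2 ^ ⌊log x / 8⌋₊ ≤ exp (-(log x / 20)) := by
  set L := log x
  set t₀ := ⌊L / 8⌋₊
  have ht₁ : (t₀ : ℝ) ≤ L / 8 := Nat.floor_le (by positivity)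
  have ht₂ : L / 8 - 1 < t₀ := Nat.sub_one_lt_floor _
  have he : exp (-1) ≤ 1 / 2 := by
    rw [exp_neg, inv_le_comm₀ (exp_pos 1) (by norm_num)]
    linarith [add_one_le_exp 1]
  have hhalf : exp (-1 - L / 20) ≤ exp (-(L / 20)) / 2 := by
    rw [sub_eq_add_neg, exp_add]
    nlinarith [exp_pos (-(L / 20))]
  have hsqrt : √(t₀ / x) ≤ exp ((t₀ - L) / 2) := by
    rw [exp_half, exp_sub, exp_log hx]
    gcongr
    linarith [add_one_le_exp t₀]
  have hpow : (2 : ℝ) ^ t₀ ≤ exp t₀ := by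
    rw [← exp_one_pow]
    gcongr
    linarith [add_one_le_exp 1]
  have h₁ : exp (-t₀) ≤ exp (-(L / 20)) / 2 := (exp_le_exp.2 (by linarith)).trans hhalf
  have h₂ : √(t₀ / x) * 2 ^ t₀ ≤ exp (-(L / 20)) / 2 :=
    calc √(t₀ / x) * 2 ^ t₀ ≤ exp ((t₀ - L) / 2) * exp t₀ := by gcongr
      _ = exp ((t₀ - L) / 2 + t₀) := (exp_add _ _).symm
      _ ≤ exp (-(L / 20)) / 2 := (exp_le_exp.2 (by linarith)).trans hhalf
  linarith

lemma twelve_mul_sqrt_le_exp {n : ℕ} (hn : 2 ≤ n) : 12 * √(n : ℝ) ≤ exp (9 / 2 * log n) := by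
  have hn₀ : (0 : ℝ) < n := by positivity
  have h12 : (12 : ℝ) ≤ n ^ 4 := by
    calc (12 : ℝ) ≤ 2 ^ 4 := by norm_num
      _ ≤ (n : ℝ) ^ 4 := by gcongr; exact_mod_cast hn
  rw [show 9 / 2 * log n = ((4 : ℕ) : ℝ) * log n + log n / 2 by push_cast; ring, exp_add,
    exp_nat_mul, exp_half, exp_log hn₀]
  gcongr

section Tails

variable {Ω : Type*} {mΩ : MeasurableSpace Ω} {P : Measure Ω} {U : ℕ × ℕ → Ω → ℝ} {n k : ℕ}

lemma ae_forall_mem_Ioo (mU : ∀ p, Measurable (U p))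
    (hlaw : ∀ p, P.map (U p) = volume.restrict (Icc 0 1)) : ∀ᵐ ω ∂P, ∀ p, U p ω ∈ Ioo 0 1 :=
  ae_all_iff.2 fun p => ae_of_ae_map (mU p).aemeasurable <| by
    rw [hlaw p, ← Measure.restrict_congr_set Ioo_ae_eq_Icc]
    exact ae_restrict_mem measurableSet_Ioo

lemma measure_sumZ_lt_le (mU : ∀ p, Measurable (U p)) (hU : iIndepFun U P)
    (hlaw : ∀ p, P.map (U p) = volume.restrict (Icc 0 1)) (hn : 2 ≤ n) :
    P {ω | (sumZ n k U ω : ℝ) < 1 / 40 * k * log n} ≤ ENNReal.ofReal (exp (-(k * log n / 40))) := by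
  have hn₀ : (0 : ℝ) < n := by positivity
  by_cases hL : log n ≤ 40
  · refine le_of_eq_of_le (measure_eq_zero_iff_ae_notMem.2 ?_) bot_le
    filter_upwards [ae_forall_mem_Ioo mU hlaw] with ω hω hlt
    have hk : k ≤ sumZ n k U ω :=
      calc k = ∑ i ∈ range k, 1 := by simp
        _ ≤ sumZ n k U ω := Finset.sum_le_sum fun i _ =>
          hitZ_pos (by omega) fun t => Set.Ioo_subset_Ico_self (hω (i, t))
    have hkS : (k : ℝ) ≤ sumZ n k U ω := by exact_mod_cast hk
    have hL₀ : 0 ≤ log n := log_nonneg (by exact_mod_cast (by omega : 1 ≤ n))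
    nlinarith
  set t₀ := ⌊log n / 8⌋₊
  set a := k * log n / 40 with ha
  have hρ := exp_neg_floor_add_sqrt_mul_two_pow_le hn₀ (not_le.1 hL)
  calc P {ω | (sumZ n k U ω : ℝ) < 1 / 40 * k * log n}
      ≤ ENNReal.ofReal (exp (-t₀) + √(t₀ / n) * 2 ^ t₀) ^ (range k).card /
          ENNReal.ofReal (exp (-a)) := by
        refine measure_le_pow_div_of_ae_le_prod mU hU (F := lowerMajorant n t₀)
          (by unfold lowerMajorant; fun_prop)
          (fun i _ => (lintegral_lowerMajorant (fun t => mU _)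
            (hU.precomp (Prod.mk_right_injective i)) (fun t => hlaw _) n t₀).le)
          (by simpa using exp_pos _) ENNReal.ofReal_ne_top ?_
        filter_upwards [ae_forall_mem_Ioo mU hlaw] with ω hω hlt
        calc ENNReal.ofReal (exp (-a)) ≤ ENNReal.ofReal (exp (-sumZ n k U ω)) :=
              ENNReal.ofReal_le_ofReal (exp_le_exp.2 (by linarith))
          _ = ∏ i ∈ range k, ENNReal.ofReal (exp (-hitZ n (fun t => U (i, t)) ω)) := by
              rw [← ENNReal.ofReal_prod_of_nonneg fun _ _ => (exp_pos _).le, ← exp_sum, sumZ,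
                Nat.cast_sum, Finset.sum_neg_distrib]
          _ ≤ _ := Finset.prod_le_prod' fun i _ =>
              exp_neg_hitZ_le_lowerMajorant (by omega) (fun t => hω (i, t)) t₀
    _ ≤ ENNReal.ofReal (exp (-a)) := by
        rw [Finset.card_range, ← ENNReal.ofReal_pow (by positivity),
          ← ENNReal.ofReal_div_of_pos (exp_pos _)]
        refine ENNReal.ofReal_le_ofReal ((div_le_iff₀ (exp_pos _)).2 ?_)
        calc (exp (-t₀) + √(t₀ / n) * 2 ^ t₀) ^ k ≤ exp (-(log n / 20)) ^ k := by gcongr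
          _ = exp (-a) * exp (-a) := by rw [← exp_nat_mul, ← exp_add, ha]; ring_nf

lemma measure_lt_sumZ_le (mU : ∀ p, Measurable (U p)) (hU : iIndepFun U P)
    (hlaw : ∀ p, P.map (U p) = volume.restrict (Icc 0 1)) (hn : 2 ≤ n) :
    P {ω | 20 * k * log n < (sumZ n k U ω : ℝ)} ≤ ENNReal.ofReal (exp (-(k * log n / 40))) := by
  have hkL : 0 ≤ k * log n :=
    mul_nonneg k.cast_nonneg (log_nonneg (by exact_mod_cast (by omega : 1 ≤ n)))
  have hlog : 1 / 4 ≤ log (4 / 3 : ℝ) := by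
    have := one_sub_inv_le_log_of_pos (by norm_num : (0 : ℝ) < 4 / 3)
    norm_num at this ⊢; linarith
  calc P {ω | 20 * k * log n < (sumZ n k U ω : ℝ)}
      ≤ ENNReal.ofReal (12 * √n) ^ (range k).card / ENNReal.ofReal (exp (5 * (k * log n))) := by
        refine measure_le_pow_div_of_ae_le_prod mU hU (F := upperMajorant n)
          (by unfold upperMajorant; fun_prop)
          (fun i _ => lintegral_upperMajorant_le (fun t => mU _)
            (hU.precomp (Prod.mk_right_injective i)) (fun t => hlaw _) n)
          (by simpa using exp_pos _) ENNReal.ofReal_ne_top ?_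
        filter_upwards [ae_forall_mem_Ioo mU hlaw] with ω hω hlt
        have hS : (0 : ℝ) ≤ sumZ n k U ω := Nat.cast_nonneg _
        calc ENNReal.ofReal (exp (5 * (k * log n)))
            ≤ ENNReal.ofReal ((4 / 3) ^ sumZ n k U ω) := by
              refine ENNReal.ofReal_le_ofReal ?_
              rw [← exp_log (by norm_num : (0 : ℝ) < 4 / 3), ← exp_nat_mul]
              exact exp_le_exp.2 (by nlinarith)
          _ = ∏ i ∈ range k, ENNReal.ofReal ((4 / 3) ^ hitZ n (fun t => U (i, t)) ω) := by
              rw [← ENNReal.ofReal_prod_of_nonneg fun _ _ => by positivity,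
                Finset.prod_pow_eq_pow_sum, sumZ]
          _ ≤ _ := Finset.prod_le_prod' fun i _ =>
              pow_hitZ_le_upperMajorant (by omega) fun t => Set.Ioo_subset_Ico_self (hω (i, t))
    _ ≤ ENNReal.ofReal (exp (-(k * log n / 40))) := by
        rw [Finset.card_range, ← ENNReal.ofReal_pow (by positivity),
          ← ENNReal.ofReal_div_of_pos (exp_pos _)]
        refine ENNReal.ofReal_le_ofReal ((div_le_iff₀ (exp_pos _)).2 ?_)
        calc (12 * √n) ^ k ≤ exp (9 / 2 * log n) ^ k := by gcongr; exact twelve_mul_sqrt_le_exp hn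
          _ = exp (9 / 2 * (k * log n)) := by rw [← exp_nat_mul]; ring_nf
          _ ≤ exp (-(k * log n / 40)) * exp (5 * (k * log n)) := by
              rw [← exp_add]; exact exp_le_exp.2 (by linarith)

lemma measure_sumZ_notMem_bounds_le (mU : ∀ p, Measurable (U p)) (hU : iIndepFun U P)
    (hlaw : ∀ p, P.map (U p) = volume.restrict (Icc 0 1)) (hn : 2 ≤ n) :
    P {ω | ¬(1 / 40 * k * log n ≤ (sumZ n k U ω : ℝ) ∧ (sumZ n k U ω : ℝ) ≤ 20 * k * log n)} ≤
      ENNReal.ofReal (2 * exp (-(k * log n / 40))) := by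
  calc _ ≤ P ({ω | (sumZ n k U ω : ℝ) < 1 / 40 * k * log n} ∪
          {ω | 20 * k * log n < (sumZ n k U ω : ℝ)}) :=
        measure_mono fun ω hω => by
          simp only [Set.mem_ofPred_eq, not_and_or, not_le] at hω
          exact hω
    _ ≤ _ := measure_union_le _ _
    _ ≤ _ := add_le_add (measure_sumZ_lt_le mU hU hlaw hn) (measure_lt_sumZ_le mU hU hlaw hn)
    _ = _ := by rw [← ENNReal.ofReal_add (by positivity) (by positivity), two_mul]

end Tails

lemma tendsto_natCast_mul_log_atTop {n k : ℕ → ℕ} (hn : ∀ j, 2 ≤ n j) (hk : ∀ j, 1 ≤ k j)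
    (hnk : Tendsto (fun j => n j + k j) atTop atTop) :
    Tendsto (fun j => (k j : ℝ) * log (n j)) atTop atTop := by
  refine tendsto_atTop_mono (fun j => ?_) <| tendsto_atTop_add_const_right _ (-log 2) <|
    tendsto_log_atTop.comp <| tendsto_natCast_atTop_atTop.comp hnk
  have hpow : n j ≤ n j ^ k j := Nat.le_self_pow (by have := hk j; omega) _
  have hlt : k j < n j ^ k j := (Nat.lt_two_pow_self).trans_le (Nat.pow_le_pow_left (hn j) _)
  have hsum : ((n j + k j : ℕ) : ℝ) ≤ 2 * (n j : ℝ) ^ k j := by exact_mod_cast (by omega : _)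
  have hn₀ : (0 : ℝ) < n j := by have := hn j; positivity
  calc log ((n j + k j : ℕ) : ℝ) + -log 2 ≤ log (2 * (n j : ℝ) ^ k j) + -log 2 := by
        gcongr
        exact_mod_cast (by have := hn j; omega : 0 < n j + k j)
    _ = k j * log (n j) := by rw [log_mul two_ne_zero (by positivity), log_pow]; ring

lemma one_sub_le_toReal_of_measure_compl_le {Ω : Type*} {mΩ : MeasurableSpace Ω} {P : Measure Ω}
    [IsProbabilityMeasure P] {s : Set Ω} {ε : ℝ} (hε : 0 ≤ ε) (h : P sᶜ ≤ ENNReal.ofReal ε) :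
    1 - ε ≤ (P s).toReal := by
  have h₁ : 1 ≤ P s + ENNReal.ofReal ε :=
    calc 1 = P Set.univ := measure_univ.symm
      _ ≤ P s + P sᶜ := measure_univ_le_add_compl s
      _ ≤ P s + ENNReal.ofReal ε := by gcongr
  have h₂ := ENNReal.toReal_mono (by finiteness) h₁
  rw [ENNReal.toReal_add (measure_ne_top _ _) ENNReal.ofReal_ne_top, ENNReal.toReal_ofReal hε,
    ENNReal.toReal_one] at h₂
  linarith

/-- There exist universal constants `0 < c < C` such that for any sequences of
integers `(n_j), (k_j)` with `n_j ≥ 2`, `k_j ≥ 1` and `n_j + k_j → ∞`, the probability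
`P( c·k_j·ln n_j ≤ T(n_j,k_j) ≤ C·k_j·ln n_j )` tends to `1` as `j → ∞`, where
`T(n,k) = Z₁ + ⋯ + Z_k` is a sum of `k` i.i.d. copies of `Z(n)`. -/
theorem cdp_sum_bounds :
    ∃ c C : ℝ, 0 < c ∧ c < C ∧
      ∀ (Ω : Type) (_ : MeasureSpace Ω) (_ : IsProbabilityMeasure (ℙ : Measure Ω))
        (U : ℕ × ℕ → Ω → ℝ), (∀ p, Measurable (U p)) →
        iIndepFun U ℙ →
        (∀ p, Measure.map (U p) ℙ = (volume : Measure ℝ).restrict (Set.Icc 0 1)) →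
        ∀ nseq kseq : ℕ → ℕ, (∀ j, 2 ≤ nseq j) → (∀ j, 1 ≤ kseq j) →
          Tendsto (fun j => nseq j + kseq j) atTop atTop →
          Tendsto
            (fun j => (ℙ {ω |
                c * (kseq j) * Real.log (nseq j) ≤ (sumZ (nseq j) (kseq j) U ω : ℝ) ∧
                (sumZ (nseq j) (kseq j) U ω : ℝ) ≤ C * (kseq j) * Real.log (nseq j)}).toReal)
            atTop (nhds 1) := by
  refine ⟨1 / 40, 20, by norm_num, by norm_num, fun Ω _ _ U mU hU hlaw n k hn hk hnk => ?_⟩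
  have hε : Tendsto (fun j => 2 * exp (-(k j * log (n j) / 40))) atTop (nhds 0) := by
    simpa using ((tendsto_exp_atBot.comp <| tendsto_neg_atTop_atBot.comp <|
      (tendsto_natCast_mul_log_atTop hn hk hnk).atTop_div_const (by norm_num)).const_mul 2)
  refine tendsto_of_tendsto_of_tendsto_of_le_of_le (by simpa using hε.const_sub 1)
    tendsto_const_nhds (fun j => ?_) fun j => measureReal_le_one
  exact one_sub_le_toReal_of_measure_compl_le (by positivity)
    (measure_sumZ_notMem_bounds_le mU hU hlaw (hn j))
end

section
/- For every integer n ≥ 2 and every natural number t, P(Z > t) ≤ n · (1/2)^t. -/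
open MeasureTheory ProbabilityTheory Filter

/-!
Since `⌊m u⌋ ≤ m u` and `U (t+1)` is independent of `R^t` with mean `1/2`, the mean of the chain
satisfies `E[R^{t+1}] ≤ E[R^t] / 2`, so `E[R^t] ≤ n / 2^t`. On `{Z > t}` we have `R^t ≥ 1`, and
Markov's inequality gives `P(Z > t) ≤ E[R^t]`.
-/

open scoped ENNReal

lemma ENNReal.natCast_floor_mul_le (m : ℕ) (u : ℝ) :
    ((⌊(m : ℝ) * u⌋₊ : ℕ) : ℝ≥0∞) ≤ m * ENNReal.ofReal u := by
  rw [← ENNReal.ofReal_natCast, ← ENNReal.ofReal_natCast m,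
    ← ENNReal.ofReal_mul (Nat.cast_nonneg m)]
  rcases le_or_gt ((m : ℝ) * u) 0 with h | h
  · simp [Nat.floor_of_nonpos h]
  · exact ENNReal.ofReal_le_ofReal (Nat.floor_le h.le)

lemma lintegral_ofReal_eq_half_of_map_eq_uniform {Ω : Type*} [MeasurableSpace Ω] {μ : Measure Ω}
    {V : Ω → ℝ} (hV : Measurable V) (hunif : μ.map V = volume.restrict (Set.Icc 0 1)) :
    ∫⁻ ω, ENNReal.ofReal (V ω) ∂μ = 2⁻¹ := by
  have hhalf : ENNReal.ofReal (1 / 2) = 2⁻¹ := by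
    rw [one_div, ENNReal.ofReal_inv_of_pos two_pos, ENNReal.ofReal_ofNat]
  have hint : ∫ x in Set.Icc (0 : ℝ) 1, x = 1 / 2 := by
    rw [integral_Icc_eq_integral_Ioc, ← intervalIntegral.integral_of_le zero_le_one]
    norm_num [integral_id]
  rw [← lintegral_map ENNReal.measurable_ofReal hV, hunif, ← hhalf, ← hint]
  exact (ofReal_integral_eq_lintegral_ofReal continuous_id.integrableOn_Icc
    (ae_restrict_of_forall_mem measurableSet_Icc fun x hx => hx.1)).symm

section Chain

variable {Ω : Type*} (n : ℕ) {U : ℕ → Ω → ℝ}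

lemma measurable_chainR [MeasurableSpace Ω] (hmeas : ∀ i, Measurable (U i)) (t : ℕ) :
    Measurable (chainR n U t) := by
  induction t with
  | zero => exact measurable_const
  | succ t ih => exact ((measurable_from_top.comp ih).mul (hmeas (t + 1))).nat_floor

variable (U) in
lemma exists_measurable_chainR_eq_comp (t : ℕ) :
    ∃ g : (Finset.range (t + 1) → ℝ) → ℕ, Measurable g ∧
      chainR n U t = g ∘ fun ω i => U i ω := by
  induction t with
  | zero => exact ⟨fun _ => n, measurable_const, rfl⟩
  | succ t ih =>
    obtain ⟨g, hg, hgU⟩ := ih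
    have hsub : ∀ i : Finset.range (t + 1), (i : ℕ) ∈ Finset.range (t + 2) := fun i =>
      Finset.mem_range.2 (Nat.lt_succ_of_lt (Finset.mem_range.1 i.2))
    refine ⟨fun v => ⌊(g (fun i => v ⟨i, hsub i⟩) : ℝ) * v ⟨t + 1, Finset.self_mem_range_succ _⟩⌋₊,
      ?_, ?_⟩
    · exact ((measurable_from_top.comp
        (hg.comp (measurable_pi_lambda _ fun i => measurable_pi_apply _))).mul
        (measurable_pi_apply _)).nat_floor
    · funext ω
      simp only [chainR, hgU, Function.comp]

lemma chainR_ne_zero_of_lt_hitZ {ω : Ω} {t : ℕ} (ht : t < hitZ n U ω) : chainR n U t ω ≠ 0 :=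
  fun h => (Nat.sInf_le (show t ∈ {t | chainR n U t ω = 0} from h)).not_gt ht

variable [MeasurableSpace Ω] {μ : Measure Ω}

lemma indepFun_chainR_succ (hmeas : ∀ i, Measurable (U i)) (hindep : iIndepFun U μ) (t : ℕ) :
    IndepFun (chainR n U t) (U (t + 1)) μ := by
  obtain ⟨g, hg, hgU⟩ := exists_measurable_chainR_eq_comp n U t
  have hdisj : Disjoint (Finset.range (t + 1)) {t + 1} := by simp
  rw [hgU]
  exact (hindep.indepFun_finset _ _ hdisj hmeas).comp hg
    (measurable_pi_apply (⟨t + 1, Finset.mem_singleton_self _⟩ : ({t + 1} : Finset ℕ)))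

lemma lintegral_chainR_le (hmeas : ∀ i, Measurable (U i)) (hindep : iIndepFun U μ)
    {c : ℝ≥0∞} (hmean : ∀ i, ∫⁻ ω, ENNReal.ofReal (U i ω) ∂μ ≤ c) (t : ℕ) :
    ∫⁻ ω, (chainR n U t ω : ℝ≥0∞) ∂μ ≤ n * c ^ t := by
  induction t with
  | zero =>
    have := hindep.isProbabilityMeasure
    simp [chainR]
  | succ t ih =>
    have hindep' : IndepFun (fun ω => (chainR n U t ω : ℝ≥0∞))
        (fun ω => ENNReal.ofReal (U (t + 1) ω)) μ :=
      (indepFun_chainR_succ n hmeas hindep t).comp measurable_from_top ENNReal.measurable_ofReal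
    calc ∫⁻ ω, (chainR n U (t + 1) ω : ℝ≥0∞) ∂μ
        ≤ ∫⁻ ω, (chainR n U t ω : ℝ≥0∞) * ENNReal.ofReal (U (t + 1) ω) ∂μ :=
          lintegral_mono fun ω => ENNReal.natCast_floor_mul_le _ _
      _ = (∫⁻ ω, (chainR n U t ω : ℝ≥0∞) ∂μ) * ∫⁻ ω, ENNReal.ofReal (U (t + 1) ω) ∂μ :=
          lintegral_mul_eq_lintegral_mul_lintegral_of_indepFun''
            (measurable_from_top.comp (measurable_chainR n hmeas t)).aemeasurable
            (ENNReal.measurable_ofReal.comp (hmeas (t + 1))).aemeasurable hindep'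
      _ ≤ n * c ^ t * c := mul_le_mul' ih (hmean (t + 1))
      _ = n * c ^ (t + 1) := by ring

lemma measure_lt_hitZ_le_lintegral_chainR (hmeas : ∀ i, Measurable (U i)) (t : ℕ) :
    μ {ω | t < hitZ n U ω} ≤ ∫⁻ ω, (chainR n U t ω : ℝ≥0∞) ∂μ := by
  have htail : {ω | t < hitZ n U ω} ⊆ {ω | 1 ≤ (chainR n U t ω : ℝ≥0∞)} := fun ω ht => by
    simpa [Nat.one_le_iff_ne_zero] using chainR_ne_zero_of_lt_hitZ n ht
  calc μ {ω | t < hitZ n U ω} ≤ μ {ω | 1 ≤ (chainR n U t ω : ℝ≥0∞)} := measure_mono htail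
    _ ≤ ∫⁻ ω, (chainR n U t ω : ℝ≥0∞) ∂μ := by
      simpa using mul_meas_ge_le_lintegral₀ (μ := μ) (f := fun ω => (chainR n U t ω : ℝ≥0∞))
        (measurable_from_top.comp (measurable_chainR n hmeas t)).aemeasurable 1

end Chain

theorem cdp_tail_bound_general
    (Ω : Type*) [MeasureSpace Ω]
    (U : ℕ → Ω → ℝ) (hmeas : ∀ i, Measurable (U i))
    (hindep : iIndepFun U ℙ)
    (hunif : ∀ i, Measure.map (U i) ℙ = (volume : Measure ℝ).restrict (Set.Icc 0 1))
    (n : ℕ) (t : ℕ) :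
    (ℙ {ω | t < hitZ n U ω}).toReal ≤ (n : ℝ) * (1 / 2) ^ t := by
  have hmean : ∀ i, ∫⁻ ω, ENNReal.ofReal (U i ω) ∂ℙ ≤ 2⁻¹ := fun i =>
    (lintegral_ofReal_eq_half_of_map_eq_uniform (hmeas i) (hunif i)).le
  have hbound : ℙ {ω | t < hitZ n U ω} ≤ n * 2⁻¹ ^ t :=
    (measure_lt_hitZ_le_lintegral_chainR n hmeas t).trans
      (lintegral_chainR_le n hmeas hindep hmean t)
  calc (ℙ {ω | t < hitZ n U ω}).toReal ≤ ((n : ℝ≥0∞) * 2⁻¹ ^ t).toReal :=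
        ENNReal.toReal_mono (by simp [ENNReal.mul_eq_top]) hbound
    _ = (n : ℝ) * (1 / 2) ^ t := by simp

/-- For every integer `n ≥ 2` and every natural number `t`,
`P(Z > t) ≤ n · (1/2)^t`. -/
theorem cdp_tail_bound
    (Ω : Type*) [MeasureSpace Ω] [IsProbabilityMeasure (ℙ : Measure Ω)]
    (U : ℕ → Ω → ℝ) (hmeas : ∀ i, Measurable (U i))
    (hindep : iIndepFun U ℙ)
    (hunif : ∀ i, Measure.map (U i) ℙ = (volume : Measure ℝ).restrict (Set.Icc 0 1))
    (n : ℕ) (hn : 2 ≤ n) (t : ℕ) :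
    (ℙ {ω | t < hitZ n U ω}).toReal ≤ (n : ℝ) * (1 / 2) ^ t :=
  cdp_tail_bound_general Ω U hmeas hindep hunif n t
end

section
/- There exist universal constants c, C > 0 such that the following holds: if (k(n))_{n≥2} is a sequence of positive integers with k(n) = o(ln n) as n → ∞, and T(n) = Z_1 + ... + Z_{k(n)} is a sum of k(n) i.i.d. copies of Z(n), then P( c · k(n) · ln n < T(n) < C · k(n) · ln n ) → 1 as n → ∞. -/
open MeasureTheory ProbabilityTheory Filter

/-!
Write `R_t` for a chain driven by i.i.d. uniform `U_t`. Since `R_{t+1} ≤ R_t U_{t+1}`, we have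
`E R_t ≤ n 2^{-t}`, so a chain survives `3 log n` steps with probability at most `1/n`.
Conversely `R_t ≥ n ∏_{s ≤ t} U_s - t`, and Markov's inequality for `∏ U_s^{-1/2}`, whose mean
is `2^t`, shows that a chain is absorbed within `log n / 6` steps with probability at most
`n^{-1/4}`. Since `k(n) ≤ log n` eventually, a union bound over the `k(n)` rows shows that with
probability tending to one every `Z_i` lies in `(log n / 6, 3 log n + 1)`.
-/

open Finset Real
open scoped ENNReal Topology

section Chain

variable {Ω : Type*} {n : ℕ} {V : ℕ → Ω → ℝ} {ω : Ω}

lemma chainR_succ_apply (t : ℕ) :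
    chainR n V (t + 1) ω = ⌊(chainR n V t ω : ℝ) * V (t + 1) ω⌋₊ := rfl

lemma chainR_eq_zero_of_le_s6 {a b : ℕ} (hab : a ≤ b) (h : chainR n V a ω = 0) :
    chainR n V b ω = 0 := by
  induction b, hab using Nat.le_induction with
  | base => exact h
  | succ b _ ih => simp [chainR_succ_apply, ih]

lemma hitZ_le_of_chainR_eq_zero {t : ℕ} (h : chainR n V t ω = 0) : hitZ n V ω ≤ t :=
  Nat.sInf_le h

lemma lt_hitZ_of_chainR_ne_zero {t s : ℕ} (ht : chainR n V t ω ≠ 0) (hs : chainR n V s ω = 0) :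
    t < hitZ n V ω := by
  by_contra! h
  exact ht (chainR_eq_zero_of_le_s6 h (Nat.sInf_mem (s := {t | chainR n V t ω = 0}) ⟨s, hs⟩))

lemma chainR_succ_le_mul (t : ℕ) :
    (chainR n V (t + 1) ω : ℝ≥0∞) ≤ chainR n V t ω * ENNReal.ofReal (V (t + 1) ω) := by
  rw [chainR_succ_apply, ← ENNReal.ofReal_natCast (chainR n V t ω),
    ← ENNReal.ofReal_mul (Nat.cast_nonneg _), ← ENNReal.ofReal_natCast]
  rcases le_total 0 ((chainR n V t ω : ℝ) * V (t + 1) ω) with h | h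
  · exact ENNReal.ofReal_le_ofReal (Nat.floor_le h)
  · simp [Nat.floor_of_nonpos h]

lemma sub_le_chainR (hV : ∀ s, V s ω ∈ Set.Icc 0 1) (t : ℕ) :
    n * ∏ s ∈ range t, V (s + 1) ω - t ≤ chainR n V t ω := by
  induction t with
  | zero => simp [chainR]
  | succ t ih =>
    obtain ⟨hV0, hV1⟩ := hV (t + 1)
    have hfloor := Nat.sub_one_lt_floor ((chainR n V t ω : ℝ) * V (t + 1) ω)
    rw [← chainR_succ_apply] at hfloor
    rw [prod_range_succ]
    push_cast
    nlinarith [mul_le_mul_of_nonneg_right ih hV0, mul_le_of_le_one_right (Nat.cast_nonneg t) hV1]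

end Chain

section MultiplicativeRecursion

variable {Ω β : Type*} {m0 : MeasurableSpace Ω} {μ : Measure Ω}
  [MeasurableSpace β] [NormedAddCommGroup β] [BorelSpace β] {V : ℕ → Ω → β}

lemma lintegral_le_mul_pow_of_le_mul (hV : ∀ s, StronglyMeasurable (V s))
    (hVi : iIndepFun V μ) {X : ℕ → Ω → ℝ≥0∞}
    (hX : ∀ t, Measurable[Filtration.natural V hV t] (X t)) {g : β → ℝ≥0∞} (hg : Measurable g)
    {m : ℝ≥0∞} (hm : ∀ s, ∫⁻ ω, g (V s ω) ∂μ ≤ m)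
    (hstep : ∀ t ω, X (t + 1) ω ≤ X t ω * g (V (t + 1) ω)) (t : ℕ) :
    ∫⁻ ω, X t ω ∂μ ≤ (∫⁻ ω, X 0 ω ∂μ) * m ^ t := by
  induction t with
  | zero => simp
  | succ t ih =>
    have hindep : Indep (Filtration.natural V hV t)
        (MeasurableSpace.comap (V (t + 1)) inferInstance) μ :=
      (hVi.indep_comap_natural_of_lt hV (Nat.lt_succ_self t)).symm
    calc ∫⁻ ω, X (t + 1) ω ∂μ ≤ ∫⁻ ω, X t ω * g (V (t + 1) ω) ∂μ := lintegral_mono (hstep t)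
      _ = (∫⁻ ω, X t ω ∂μ) * ∫⁻ ω, g (V (t + 1) ω) ∂μ :=
        lintegral_mul_eq_lintegral_mul_lintegral_of_independent_measurableSpace
          (Filtration.le _ t) (hV (t + 1)).measurable.comap_le hindep (hX t)
          (hg.comp (comap_measurable (V (t + 1))))
      _ ≤ (∫⁻ ω, X 0 ω ∂μ) * m ^ t * m := mul_le_mul' ih (hm _)
      _ = (∫⁻ ω, X 0 ω ∂μ) * m ^ (t + 1) := by rw [pow_succ, mul_assoc]

end MultiplicativeRecursion

lemma setLIntegral_Icc_ofReal_rpow {r : ℝ} (hr : -1 < r) :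
    ∫⁻ x in Set.Icc (0 : ℝ) 1, ENNReal.ofReal (x ^ r) = ENNReal.ofReal (1 / (r + 1)) := by
  have hint : IntegrableOn (fun x : ℝ => x ^ r) (Set.Icc 0 1) := by
    rw [integrableOn_Icc_iff_integrableOn_Ioc]
    exact (intervalIntegral.intervalIntegrable_rpow' (a := 0) (b := 1) hr).1
  rw [← ofReal_integral_eq_lintegral_ofReal hint
    ((ae_restrict_iff' measurableSet_Icc).2 (ae_of_all _ fun x hx => Real.rpow_nonneg hx.1 r)),
    integral_Icc_eq_integral_Ioc, ← intervalIntegral.integral_of_le zero_le_one,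
    integral_rpow (Or.inl hr), Real.one_rpow, Real.zero_rpow (by linarith)]
  simp

section UniformChain

variable {Ω : Type*} {m0 : MeasurableSpace Ω} {μ : Measure Ω} {V : ℕ → Ω → ℝ} {n : ℕ}

lemma measurable_chainR_natural (hV : ∀ s, StronglyMeasurable (V s)) (t : ℕ) :
    Measurable[Filtration.natural V hV t] (chainR n V t) := by
  induction t with
  | zero => exact measurable_const
  | succ t ih =>
    have hV' := (Filtration.stronglyAdapted_natural hV (t + 1)).measurable
    have ih' := ih.mono (Filtration.mono _ t.le_succ) le_rfl
    exact Nat.measurable_floor.comp ((measurable_from_nat.comp ih').mul hV')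

lemma ae_forall_mem_Ioc (hV : ∀ s, Measurable (V s))
    (hVl : ∀ s, μ.map (V s) = volume.restrict (Set.Icc 0 1)) :
    ∀ᵐ ω ∂μ, ∀ s, V s ω ∈ Set.Ioc 0 1 := by
  refine ae_all_iff.2 fun s => ae_of_ae_map (hV s).aemeasurable ?_
  rw [hVl s]
  filter_upwards [ae_restrict_mem measurableSet_Icc,
    ae_restrict_of_ae (Ioc_ae_eq_Icc (a := (0 : ℝ)) (b := 1))] with x hx hx'
  show Set.Ioc 0 1 x
  rwa [hx']

variable (hV : ∀ s, Measurable (V s)) (hVi : iIndepFun V μ)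
  (hVl : ∀ s, μ.map (V s) = volume.restrict (Set.Icc 0 1))
include hV hVi hVl

lemma lintegral_chainR_le_s6 (t : ℕ) :
    ∫⁻ ω, (chainR n V t ω : ℝ≥0∞) ∂μ ≤ n * 2⁻¹ ^ t := by
  have := hVi.isProbabilityMeasure
  have hm : ∀ s, ∫⁻ ω, ENNReal.ofReal (V s ω) ∂μ ≤ 2⁻¹ := fun s => by
    have h := setLIntegral_Icc_ofReal_rpow (r := 1) (by norm_num)
    simp only [Real.rpow_one] at h
    rw [← lintegral_map ENNReal.measurable_ofReal (hV s), hVl s, h, one_add_one_eq_two,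
      one_div, ENNReal.ofReal_inv_of_pos two_pos, ENNReal.ofReal_ofNat]
  calc ∫⁻ ω, (chainR n V t ω : ℝ≥0∞) ∂μ
      ≤ (∫⁻ ω, (chainR n V 0 ω : ℝ≥0∞) ∂μ) * 2⁻¹ ^ t :=
        lintegral_le_mul_pow_of_le_mul (fun s => (hV s).stronglyMeasurable) hVi
          (fun t => measurable_from_nat.comp (measurable_chainR_natural _ t))
          ENNReal.measurable_ofReal hm (fun t _ => chainR_succ_le_mul t) t
    _ = n * 2⁻¹ ^ t := by simp [chainR]

lemma measureReal_chainR_ne_zero_le (t : ℕ) :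
    μ.real {ω | chainR n V t ω ≠ 0} ≤ n / 2 ^ t := by
  have hmeas : Measurable fun ω => (chainR n V t ω : ℝ≥0∞) :=
    measurable_from_nat.comp
      ((measurable_chainR_natural (fun s => (hV s).stronglyMeasurable) t).mono
        (Filtration.le _ t) le_rfl)
  have hmarkov :=
    meas_ge_le_lintegral_div (μ := μ) hmeas.aemeasurable one_ne_zero ENNReal.one_ne_top
  simp only [Nat.one_le_cast, Nat.one_le_iff_ne_zero, div_one] at hmarkov
  calc μ.real {ω | chainR n V t ω ≠ 0} ≤ ((n : ℝ≥0∞) * 2⁻¹ ^ t).toReal :=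
        ENNReal.toReal_mono (by finiteness) (hmarkov.trans (lintegral_chainR_le_s6 hV hVi hVl t))
    _ = n / 2 ^ t := by simp [div_eq_mul_inv]

lemma measureReal_chainR_eq_zero_le (hn : 0 < n) (t : ℕ) :
    μ.real {ω | chainR n V t ω = 0} ≤ 2 ^ t * √((t + 1) / n) := by
  have := hVi.isProbabilityMeasure
  set a : ℝ := (t + 1) / n
  have ha : 0 < a := by positivity
  have hVs : ∀ s, StronglyMeasurable (V s) := fun s => (hV s).stronglyMeasurable
  have hg : Measurable fun x : ℝ => ENNReal.ofReal (x ^ (-(1 / 2) : ℝ)) :=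
    ENNReal.measurable_ofReal.comp (measurable_id.pow_const _)
  set X : ℕ → Ω → ℝ≥0∞ := fun t ω => ∏ s ∈ range t, ENNReal.ofReal (V (s + 1) ω ^ (-(1 / 2) : ℝ))
  have hX : ∀ t, Measurable[Filtration.natural V hVs t] (X t) := fun t =>
    Finset.measurable_prod _ fun s hs => hg.comp
      (((Filtration.stronglyAdapted_natural hVs (s + 1)).measurable).mono
        (Filtration.mono _ (by simpa using hs)) le_rfl)
  have hm : ∀ s, ∫⁻ ω, ENNReal.ofReal (V s ω ^ (-(1 / 2) : ℝ)) ∂μ ≤ 2 := fun s => by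
    rw [← lintegral_map hg (hV s), hVl s, setLIntegral_Icc_ofReal_rpow (by norm_num)]
    norm_num
  have hXint : ∫⁻ ω, X t ω ∂μ ≤ 2 ^ t := by
    calc ∫⁻ ω, X t ω ∂μ ≤ (∫⁻ ω, X 0 ω ∂μ) * 2 ^ t :=
          lintegral_le_mul_pow_of_le_mul hVs hVi hX hg hm
            (fun t ω => by simp only [X, prod_range_succ, le_rfl]) t
      _ = 2 ^ t := by simp [X]
  have hsub : {ω | chainR n V t ω = 0} ≤ᵐ[μ]
      {ω | ENNReal.ofReal (a ^ (-(1 / 2) : ℝ)) ≤ X t ω} := by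
    filter_upwards [ae_forall_mem_Ioc hV hVl] with ω hω (h0 : chainR n V t ω = 0)
    have hprod_pos : 0 < ∏ s ∈ range t, V (s + 1) ω := prod_pos fun s _ => (hω _).1
    have hprod_le : ∏ s ∈ range t, V (s + 1) ω ≤ a := by
      have h := sub_le_chainR (n := n) (fun s => Set.Ioc_subset_Icc_self (hω s)) t
      rw [h0] at h
      rw [le_div_iff₀ (by positivity)]
      push_cast at h
      linarith
    show _ ≤ ∏ s ∈ range t, _
    rw [← ENNReal.ofReal_prod_of_nonneg fun s _ => Real.rpow_nonneg (hω _).1.le _,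
      Real.finsetProd_rpow _ _ fun s _ => (hω _).1.le]
    exact ENNReal.ofReal_le_ofReal (Real.rpow_le_rpow_of_nonpos hprod_pos hprod_le (by norm_num))
  have hε : ENNReal.ofReal (a ^ (-(1 / 2) : ℝ)) ≠ 0 :=
    (ENNReal.ofReal_pos.2 (Real.rpow_pos_of_pos ha _)).ne'
  calc μ.real {ω | chainR n V t ω = 0} ≤ (2 ^ t / ENNReal.ofReal (a ^ (-(1 / 2) : ℝ))).toReal :=
        ENNReal.toReal_mono (ENNReal.div_ne_top (by finiteness) hε) ((measure_mono_ae hsub).trans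
          ((meas_ge_le_lintegral_div (hX t |>.mono (Filtration.le _ t) le_rfl).aemeasurable hε
            ENNReal.ofReal_ne_top).trans (ENNReal.div_le_div_right hXint _)))
    _ = 2 ^ t * √a := by
        rw [ENNReal.toReal_div, ENNReal.toReal_ofReal (Real.rpow_nonneg ha.le _),
          Real.rpow_neg ha.le, ← Real.sqrt_eq_rpow, div_inv_eq_mul]
        simp

end UniformChain

lemma natCast_div_two_pow_le {n s : ℕ} (hn : 0 < n) (hs : 3 * log n ≤ s) :
    (n : ℝ) / 2 ^ s ≤ exp (-1 * log n) := by
  have h23 : exp (2 / 3) ≤ 2 := (le_log_iff_exp_le two_pos).1 (by linarith [log_two_gt_d9])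
  have h2s : exp (2 * log n) ≤ 2 ^ s :=
    calc exp (2 * log n) ≤ exp (2 / 3) ^ s := by
          rw [← exp_nat_mul]; exact exp_le_exp.2 (by linarith)
      _ ≤ 2 ^ s := pow_le_pow_left₀ (exp_pos _).le h23 s
  calc (n : ℝ) / 2 ^ s ≤ n / exp (2 * log n) := by gcongr
    _ = exp (-1 * log n) := by
      rw [div_eq_iff (exp_pos _).ne', ← exp_add]
      nth_rw 1 [← exp_log (Nat.cast_pos.2 hn)]
      ring_nf

lemma two_pow_mul_sqrt_le {n t : ℕ} (hn : 0 < n) (ht : 6 * t ≤ log n) :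
    2 ^ t * √((t + 1) / n) ≤ exp (-(1 / 4) * log n) := by
  have h2 : (2 : ℝ) ^ t ≤ exp t :=
    calc (2 : ℝ) ^ t ≤ exp 1 ^ t := by gcongr; linarith [add_one_le_exp 1]
      _ = exp t := by rw [← exp_nat_mul, mul_one]
  have hfrac : (t + 1) / n ≤ exp (t - log n) := by
    rw [exp_sub, exp_log (by positivity)]
    gcongr
    exact add_one_le_exp _
  calc 2 ^ t * √((t + 1) / n) ≤ exp t * exp ((t - log n) / 2) := by
        rw [exp_half]
        gcongr
    _ ≤ exp (-(1 / 4) * log n) := by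
        rw [← exp_add]
        gcongr
        linarith

lemma tendsto_log_mul_exp_neg_mul_log {b : ℝ} (hb : 0 < b) :
    Tendsto (fun n : ℕ => log n * exp (-b * log n)) atTop (𝓝 0) := by
  simpa [Function.comp_def] using (tendsto_rpow_mul_exp_neg_mul_atTop_nhds_zero 1 b hb).comp
    (tendsto_log_atTop.comp tendsto_natCast_atTop_atTop)

lemma sumZ_mem_Icc {Ω : Type*} {U : ℕ × ℕ → Ω → ℝ} {n k t s : ℕ} {ω : Ω}
    (h : ∀ i < k, chainR n (fun r => U (i, r)) t ω ≠ 0 ∧ chainR n (fun r => U (i, r)) s ω = 0) :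
    k * (t + 1) ≤ sumZ n k U ω ∧ sumZ n k U ω ≤ k * s := by
  have hZ : ∀ i ∈ range k, t + 1 ≤ hitZ n (fun r => U (i, r)) ω ∧
      hitZ n (fun r => U (i, r)) ω ≤ s := fun i hi =>
    have hi := h i (mem_range.1 hi)
    ⟨lt_hitZ_of_chainR_ne_zero hi.1 hi.2, hitZ_le_of_chainR_eq_zero hi.2⟩
  rw [sumZ]
  constructor
  · simpa using card_nsmul_le_sum _ _ _ fun i hi => (hZ i hi).1
  · simpa using sum_le_card_nsmul _ _ _ fun i hi => (hZ i hi).2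

lemma sumZ_mem_Ioo {Ω : Type*} {U : ℕ × ℕ → Ω → ℝ} {n k : ℕ} {ω : Ω} (hk : 1 ≤ k)
    (hL : 1 ≤ log n)
    (h : ∀ i < k, chainR n (fun r => U (i, r)) ⌊log n / 6⌋₊ ω ≠ 0 ∧
      chainR n (fun r => U (i, r)) ⌈3 * log n⌉₊ ω = 0) :
    1 / 6 * k * log n < sumZ n k U ω ∧ (sumZ n k U ω : ℝ) < 4 * k * log n := by
  obtain ⟨hlow, hup⟩ := sumZ_mem_Icc h
  have hk' : (1 : ℝ) ≤ k := by exact_mod_cast hk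
  have ht := Nat.lt_floor_add_one (log n / 6)
  have hs := Nat.ceil_lt_add_one (by linarith : 0 ≤ 3 * log n)
  constructor
  · calc 1 / 6 * k * log n < k * (⌊log n / 6⌋₊ + 1) := by nlinarith
      _ ≤ sumZ n k U ω := by exact_mod_cast hlow
  · calc (sumZ n k U ω : ℝ) ≤ k * ⌈3 * log n⌉₊ := by exact_mod_cast hup
      _ < 4 * k * log n := by nlinarith

section Rows

variable {Ω : Type*} {m0 : MeasurableSpace Ω} {μ : Measure Ω} {U : ℕ × ℕ → Ω → ℝ}
  (hU : ∀ p, Measurable (U p)) (hUi : iIndepFun U μ)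
  (hUl : ∀ p, μ.map (U p) = volume.restrict (Set.Icc 0 1))
include hU hUi hUl

lemma measureReal_exists_row_ne_zero_le (n k s : ℕ) :
    μ.real (⋃ i ∈ range k, {ω | chainR n (fun r => U (i, r)) s ω ≠ 0}) ≤ k * (n / 2 ^ s) := by
  refine (measureReal_biUnion_finset_le _ _).trans <| (sum_le_card_nsmul (range k) _ _
    fun i _ => measureReal_chainR_ne_zero_le (fun r => hU _)
      (hUi.precomp (Prod.mk_right_injective i)) (fun r => hUl _) s).trans_eq ?_
  simp

lemma measureReal_exists_row_eq_zero_le {n : ℕ} (hn : 0 < n) (k t : ℕ) :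
    μ.real (⋃ i ∈ range k, {ω | chainR n (fun r => U (i, r)) t ω = 0}) ≤
      k * (2 ^ t * √((t + 1) / n)) := by
  refine (measureReal_biUnion_finset_le _ _).trans <| (sum_le_card_nsmul (range k) _ _
    fun i _ => measureReal_chainR_eq_zero_le (fun r => hU _)
      (hUi.precomp (Prod.mk_right_injective i)) (fun r => hUl _) hn t).trans_eq ?_
  simp

lemma tendsto_measureReal_exists_row_alive_or_absorbed {k : ℕ → ℕ}
    (hkL : ∀ᶠ n in atTop, (k n : ℝ) ≤ log n) :
    Tendsto (fun n => μ.real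
      ((⋃ i ∈ range (k n), {ω | chainR n (fun r => U (i, r)) ⌈3 * log n⌉₊ ω ≠ 0}) ∪
        ⋃ i ∈ range (k n), {ω | chainR n (fun r => U (i, r)) ⌊log n / 6⌋₊ ω = 0}))
      atTop (𝓝 0) := by
  have hbound := (tendsto_log_mul_exp_neg_mul_log one_pos).add
    (tendsto_log_mul_exp_neg_mul_log (b := 1 / 4) (by norm_num))
  rw [add_zero] at hbound
  refine squeeze_zero' (Eventually.of_forall fun n => measureReal_nonneg) ?_ hbound
  filter_upwards [hkL, eventually_gt_atTop 0] with n hkn hn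
  have hL : 0 ≤ log n := (Nat.cast_nonneg _).trans hkn
  refine (measureReal_union_le _ _).trans (add_le_add
    ((measureReal_exists_row_ne_zero_le hU hUi hUl n _ _).trans ?_)
    ((measureReal_exists_row_eq_zero_le hU hUi hUl hn _ _).trans ?_))
  · exact mul_le_mul hkn (natCast_div_two_pow_le hn (Nat.le_ceil _)) (by positivity) hL
  · refine mul_le_mul hkn (two_pow_mul_sqrt_le hn ?_) (by positivity) hL
    linarith [Nat.floor_le (div_nonneg hL (by norm_num : (0 : ℝ) ≤ 6))]

end Rows

lemma tendsto_measureReal_of_compl_subset {Ω ι : Type*} {m0 : MeasurableSpace Ω}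
    {μ : Measure Ω} [IsProbabilityMeasure μ] {l : Filter ι} {B G : ι → Set Ω}
    (hB : Tendsto (fun i => μ.real (B i)) l (𝓝 0)) (hBG : ∀ᶠ i in l, (B i)ᶜ ⊆ G i) :
    Tendsto (fun i => μ.real (G i)) l (𝓝 1) := by
  refine tendsto_of_tendsto_of_tendsto_of_le_of_le' (by simpa using hB.const_sub 1)
    tendsto_const_nhds ?_ (Eventually.of_forall fun i => measureReal_le_one)
  filter_upwards [hBG] with i hi
  have := measureReal_union_le (μ := μ) (B i) (B i)ᶜ
  rw [Set.union_compl_self, probReal_univ] at this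
  linarith [measureReal_mono (μ := μ) hi]

/-- There exist universal constants `c, C > 0` such that: if `(k(n))` is a
sequence of positive integers with `k(n) = o(ln n)` as `n → ∞`, and `T(n) = Z₁ + ⋯ + Z_{k(n)}`
is a sum of `k(n)` i.i.d. copies of `Z(n)`, then
`P( c·k(n)·ln n < T(n) < C·k(n)·ln n ) → 1` as `n → ∞`. -/
theorem cdp_sum_bounds_small_k :
    ∃ c C : ℝ, 0 < c ∧ 0 < C ∧
      ∀ (Ω : Type) (_ : MeasureSpace Ω) (_ : IsProbabilityMeasure (ℙ : Measure Ω))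
        (U : ℕ × ℕ → Ω → ℝ), (∀ p, Measurable (U p)) →
        iIndepFun U ℙ →
        (∀ p, Measure.map (U p) ℙ = (volume : Measure ℝ).restrict (Set.Icc 0 1)) →
        ∀ k : ℕ → ℕ, (∀ n, 1 ≤ k n) →
          (fun n => (k n : ℝ)) =o[atTop] (fun n => Real.log n) →
          Tendsto
            (fun n => (ℙ {ω | c * (k n) * Real.log n < (sumZ n (k n) U ω : ℝ) ∧
                (sumZ n (k n) U ω : ℝ) < C * (k n) * Real.log n}).toReal)
            atTop (nhds 1) := by
  refine ⟨1 / 6, 4, by norm_num, by norm_num, ?_⟩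
  intro Ω _ _ U hU hUi hUl k hk hko
  have hlog : Tendsto (fun n : ℕ => log n) atTop atTop :=
    tendsto_log_atTop.comp tendsto_natCast_atTop_atTop
  have hkL : ∀ᶠ n in atTop, (k n : ℝ) ≤ log n := by
    filter_upwards [hko.eventuallyLE, hlog.eventually_ge_atTop 0] with n h h0
    simpa [abs_of_nonneg h0] using h
  refine tendsto_measureReal_of_compl_subset
    (tendsto_measureReal_exists_row_alive_or_absorbed hU hUi hUl hkL) ?_
  filter_upwards [hlog.eventually_ge_atTop 1] with n hL ω hω
  simp only [Set.compl_union, Set.compl_iUnion, Set.mem_inter_iff, Set.mem_iInter,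
    Set.mem_compl_iff, Set.mem_ofPred_eq, mem_range, not_not] at hω
  exact sumZ_mem_Ioo (hk n) hL fun i hi => ⟨hω.2 i hi, hω.1 i hi⟩
end

section
/- Fix integers n, t ≥ 1 and any sequence x_1, ..., x_t ∈ {1, ..., n}. Define column heights h^s : {1,...,n} → ℕ recursively by h^0 ≡ 0 and, for 0 ≤ s < t, h^{s+1}(i) = max( h^s(i), h^s(x_{s+1}) + 1 ) if i ≤ x_{s+1}, and h^{s+1}(i) = h^s(i) otherwise. Then for every j ∈ {1,...,n}, h^t(j) equals the maximum length of a non-increasing subsequence of (x_1, ..., x_t) all of whose terms are ≥ j. In particular, h^t(1) equals the maximum length of a non-increasing subsequence of (x_1, ..., x_t). -/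
private def Sset (x : ℕ → ℕ) (s j : ℕ) : Set ℕ :=
  {k : ℕ | ∃ ι : Fin k → ℕ, StrictMono ι ∧ (∀ a, ι a ∈ Finset.Icc 1 s) ∧
    (∀ a, j ≤ x (ι a)) ∧ Antitone (fun a => x (ι a))}

private lemma zero_mem_Sset (x : ℕ → ℕ) (s j : ℕ) : 0 ∈ Sset x s j :=
  ⟨Fin.elim0, fun a => a.elim0, fun a => a.elim0, fun a => a.elim0, fun a => a.elim0⟩

private lemma Sset_bdd (x : ℕ → ℕ) (s j : ℕ) : ∀ k ∈ Sset x s j, k ≤ s := by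
  rintro k ⟨ι, hmono, hmem, -, -⟩
  have hinj : Function.Injective
      (fun a : Fin k => (⟨ι a, hmem a⟩ : (Finset.Icc 1 s : Finset ℕ))) :=
    fun a b hab => hmono.injective (congrArg Subtype.val hab)
  have := Fintype.card_le_of_injective _ hinj
  simpa using this

private lemma Sset_bddAbove (x : ℕ → ℕ) (s j : ℕ) : BddAbove (Sset x s j) :=
  ⟨s, fun k hk => Sset_bdd x s j k hk⟩

private lemma Sset_mono (x : ℕ → ℕ) (s j : ℕ) : Sset x s j ⊆ Sset x (s+1) j := by
  rintro k ⟨ι, h1, h2, h3, h4⟩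
  refine ⟨ι, h1, fun a => ?_, h3, h4⟩
  have := Finset.mem_Icc.mp (h2 a)
  exact Finset.mem_Icc.mpr ⟨this.1, by omega⟩

private lemma Sset_succ (x : ℕ → ℕ) (s j : ℕ) :
    sSup (Sset x (s+1) j) =
      if j ≤ x (s+1) then max (sSup (Sset x s j)) (sSup (Sset x s (x (s+1))) + 1)
      else sSup (Sset x s j) := by
  by_cases hc : j ≤ x (s+1)
  · simp only [if_pos hc]
    apply le_antisymm
    · apply csSup_le ⟨0, zero_mem_Sset x (s+1) j⟩
      rintro k ⟨ι, hmono, hmem, hge, hanti⟩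
      by_cases hocc : ∃ a, ι a = s + 1
      · obtain ⟨a₀, ha₀⟩ := hocc
        match k with
        | 0 => exact Nat.zero_le _
        | m + 1 =>
          have hlast : a₀ = Fin.last m := by
            by_contra hne
            have hlt : a₀ < Fin.last m := lt_of_le_of_ne (Fin.le_last a₀) hne
            have h1 : ι (Fin.last m) ≤ s + 1 := (Finset.mem_Icc.mp (hmem _)).2
            have h2 : ι a₀ < ι (Fin.last m) := hmono hlt
            omega
          have hmem' : m ∈ Sset x s (x (s+1)) := by
            refine ⟨fun a => ι a.castSucc, fun a b hab => hmono (by simpa using hab),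
              fun a => ?_, fun a => ?_, fun a b hab => hanti (by simpa using hab)⟩
            · have h1 := Finset.mem_Icc.mp (hmem a.castSucc)
              have h2 : ι a.castSucc < ι (Fin.last m) := hmono (Fin.castSucc_lt_last a)
              rw [hlast] at ha₀
              show ι a.castSucc ∈ Finset.Icc 1 s
              exact Finset.mem_Icc.mpr ⟨h1.1, by omega⟩
            · have h3 : x (ι (Fin.last m)) ≤ x (ι a.castSucc) :=
                hanti (Fin.le_last a.castSucc)
              rw [hlast] at ha₀
              show x (s + 1) ≤ x (ι a.castSucc)
              rwa [ha₀] at h3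
          have := le_csSup (Sset_bddAbove x s (x (s+1))) hmem'
          omega
      · push_neg at hocc
        have hk : k ∈ Sset x s j := by
          refine ⟨ι, hmono, fun a => ?_, hge, hanti⟩
          have h1 := Finset.mem_Icc.mp (hmem a)
          have h2 := hocc a
          exact Finset.mem_Icc.mpr ⟨h1.1, by omega⟩
        exact le_max_of_le_left (le_csSup (Sset_bddAbove x s j) hk)
    · apply max_le
      · exact csSup_le_csSup (Sset_bddAbove x (s+1) j) ⟨0, zero_mem_Sset x s j⟩
          (Sset_mono x s j)
      · set m := sSup (Sset x s (x (s+1))) with hm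
        obtain ⟨ι, hmono, hmem, hge, hanti⟩ :=
          Nat.sSup_mem ⟨0, zero_mem_Sset x s (x (s+1))⟩ (Sset_bddAbove x s (x (s+1)))
        have hmem' : m + 1 ∈ Sset x (s+1) j := by
          refine ⟨fun a => if h : (a : ℕ) < m then ι ⟨a, h⟩ else s + 1,
            ?_, ?_, ?_, ?_⟩
          · intro a b hab
            dsimp only
            split_ifs with ha hb hb
            · exact hmono (show (⟨a, ha⟩ : Fin m) < ⟨b, hb⟩ from hab)
            · have := (Finset.mem_Icc.mp (hmem ⟨a, ha⟩)).2
              omega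
            · exact absurd (Fin.lt_iff_val_lt_val.mp hab) (by omega)
            · exact absurd (Fin.lt_iff_val_lt_val.mp hab) (by omega)
          · intro a
            dsimp only
            split_ifs with ha
            · have := Finset.mem_Icc.mp (hmem ⟨a, ha⟩)
              exact Finset.mem_Icc.mpr ⟨this.1, by omega⟩
            · exact Finset.mem_Icc.mpr ⟨by omega, le_rfl⟩
          · intro a
            dsimp only
            split_ifs with ha
            · exact le_trans hc (hge ⟨a, ha⟩)
            · exact hc
          · intro a b hab
            dsimp only
            split_ifs with hb ha ha
            · exact hanti (show (⟨a, ha⟩ : Fin m) ≤ ⟨b, hb⟩ from hab)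
            · exact absurd (Fin.le_iff_val_le_val.mp hab) (by omega)
            · exact hge ⟨a, ha⟩
            · exact le_rfl
        have := le_csSup (Sset_bddAbove x (s+1) j) hmem'
        omega
  · simp only [if_neg hc]
    apply le_antisymm
    · apply csSup_le ⟨0, zero_mem_Sset x (s+1) j⟩
      rintro k ⟨ι, hmono, hmem, hge, hanti⟩
      have hk : k ∈ Sset x s j := by
        refine ⟨ι, hmono, fun a => ?_, hge, hanti⟩
        have h1 := Finset.mem_Icc.mp (hmem a)
        have h2 : ι a ≠ s + 1 := by
          intro heq
          have := hge a
          rw [heq] at this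
          exact hc this
        exact Finset.mem_Icc.mpr ⟨h1.1, by omega⟩
      exact le_csSup (Sset_bddAbove x s j) hk
    · exact csSup_le_csSup (Sset_bddAbove x (s+1) j) ⟨0, zero_mem_Sset x s j⟩
        (Sset_mono x s j)

/-- Fix integers `n, t ≥ 1` and a sequence `x_1, …, x_t ∈ {1, …, n}`.
Define column heights `h^s` recursively by `h^0 ≡ 0` and, for `0 ≤ s < t`,
`h^{s+1}(i) = max(h^s(i), h^s(x_{s+1}) + 1)` if `i ≤ x_{s+1}`, and `h^{s+1}(i) = h^s(i)`
otherwise. Then for every `j ∈ {1, …, n}`, `h^t(j)` equals the maximum length of a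
non-increasing subsequence of `(x_1, …, x_t)` all of whose terms are `≥ j`; in particular,
`h^t(1)` is the maximum length of a non-increasing subsequence of `(x_1, …, x_t)`. -/
theorem grid_heights_eq_longest_nonincreasing_subsequence
    (n t : ℕ) (hn : 1 ≤ n) (ht : 1 ≤ t)
    (x : ℕ → ℕ) (hx : ∀ s, 1 ≤ s → s ≤ t → x s ∈ Finset.Icc 1 n)
    (h : ℕ → ℕ → ℕ)
    (h0 : ∀ i ∈ Finset.Icc 1 n, h 0 i = 0)
    (hrec : ∀ s < t, ∀ i ∈ Finset.Icc 1 n,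
      h (s + 1) i = if i ≤ x (s + 1) then max (h s i) (h s (x (s + 1)) + 1) else h s i) :
    (∀ j ∈ Finset.Icc 1 n,
      h t j = sSup {k : ℕ | ∃ ι : Fin k → ℕ, StrictMono ι ∧
        (∀ a, ι a ∈ Finset.Icc 1 t) ∧ (∀ a, j ≤ x (ι a)) ∧
        Antitone (fun a => x (ι a))}) ∧
    h t 1 = sSup {k : ℕ | ∃ ι : Fin k → ℕ, StrictMono ι ∧
        (∀ a, ι a ∈ Finset.Icc 1 t) ∧ Antitone (fun a => x (ι a))} := by
  have key : ∀ s, s ≤ t → ∀ j ∈ Finset.Icc 1 n, h s j = sSup (Sset x s j) := by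
    intro s
    induction s with
    | zero =>
      intro _ j hj
      rw [h0 j hj]
      have h1 := csSup_le ⟨0, zero_mem_Sset x 0 j⟩ (Sset_bdd x 0 j)
      omega
    | succ s ih =>
      intro hst j hj
      have hslt : s < t := by omega
      have hxmem : x (s+1) ∈ Finset.Icc 1 n := hx (s+1) (by omega) hst
      rw [hrec s hslt j hj, Sset_succ]
      by_cases hc : j ≤ x (s+1)
      · simp only [if_pos hc]
        rw [ih (by omega) j hj, ih (by omega) _ hxmem]
      · simp only [if_neg hc]
        exact ih (by omega) j hj
  constructor
  · intro j hj
    exact key t le_rfl j hj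
  · have hset : {k : ℕ | ∃ ι : Fin k → ℕ, StrictMono ι ∧
        (∀ a, ι a ∈ Finset.Icc 1 t) ∧ Antitone (fun a => x (ι a))} = Sset x t 1 := by
      ext k
      constructor
      · rintro ⟨ι, h1, h2, h3⟩
        refine ⟨ι, h1, h2, fun a => ?_, h3⟩
        have hm := Finset.mem_Icc.mp (h2 a)
        exact (Finset.mem_Icc.mp (hx (ι a) hm.1 hm.2)).1
      · rintro ⟨ι, h1, h2, _, h4⟩
        exact ⟨ι, h1, h2, h4⟩
    rw [hset]
    exact key t le_rfl 1 (Finset.mem_Icc.mpr ⟨le_rfl, hn⟩)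
end

section
/- Fix integers n, k, t ≥ 1 with k ≤ n, and let X_1, ..., X_t be i.i.d. random variables uniformly distributed on {1, ..., n}. Then the probability that (X_1, ..., X_t) contains a non-increasing subsequence of length k is at most (2e^2 t / k^2)^k. -/
/-!
Union bound over the `choose t k` index sets. For a fixed one, the `k` sampled values form a
non-increasing tuple in `{1, …, n}`; reversing it and adding the position makes it strictly
increasing in `{1, …, n + k - 1}`, so there are at most `choose (n + k - 1) k` such tuples, each
of probability `n⁻ᵏ` by independence. Finally, as `k ≤ n` and `k! ≥ (k / e)ᵏ`,
`choose t k * choose (n + k - 1) k * n⁻ᵏ ≤ (2t)ᵏ / k!² ≤ (2e²t / k²)ᵏ`.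
-/

open MeasureTheory ProbabilityTheory Finset Real

open Classical in
theorem card_strictMono_piFinset_le_choose {α : Type*} [LinearOrder α] (s : Finset α) (k : ℕ) :
    #{f ∈ Fintype.piFinset fun _ : Fin k => s | StrictMono f} ≤ (#s).choose k := by
  rw [← card_powersetCard]
  refine card_le_card_of_injOn (fun f => univ.image f) (fun f hf => ?_) (fun f hf g hg hfg => ?_)
  · simp only [coe_filter, Fintype.mem_piFinset, Set.mem_ofPred_eq] at hf
    rw [mem_coe, mem_powersetCard, card_image_of_injective _ hf.2.injective, card_univ,
      Fintype.card_fin]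
    exact ⟨image_subset_iff.2 fun a _ => hf.1 a, rfl⟩
  · simp only [coe_filter, Set.mem_ofPred_eq] at hf hg
    refine Set.range_injOn_strictMono hf.2 hg.2 ?_
    simpa [Set.image_univ] using congrArg ((↑) : Finset α → Set α) hfg

open Classical in
theorem card_antitone_piFinset_Icc_le_choose (n k : ℕ) :
    #{m ∈ Fintype.piFinset fun _ : Fin k => Icc 1 n | Antitone m} ≤ (n + k - 1).choose k := by
  calc _ ≤ #{f ∈ Fintype.piFinset fun _ : Fin k => Icc 1 (n + k - 1) | StrictMono f} := by
        refine card_le_card_of_injOn (fun m a => m a.rev + a) (fun m hm => ?_)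
          (fun m _ m' _ h => funext fun a => ?_)
        · simp only [coe_filter, Fintype.mem_piFinset, mem_Icc, Set.mem_ofPred_eq] at hm ⊢
          refine ⟨fun a => ?_, fun a b hab => ?_⟩
          · have := hm.1 a.rev
            omega
          · have := hm.2 (Fin.rev_le_rev.2 hab.le)
            have : (a : ℕ) < b := hab
            dsimp only
            omega
        · simpa using congrFun h a.rev
    _ ≤ (n + k - 1).choose k := by
        simpa using card_strictMono_piFinset_le_choose (Icc 1 (n + k - 1)) k

theorem inv_factorial_le_exp_div_pow (k : ℕ) : (k.factorial : ℝ)⁻¹ ≤ exp 1 ^ k / k ^ k := by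
  have hpos : (0 : ℝ) < k ^ k := by exact_mod_cast Nat.pow_self_pos
  rw [exp_one_pow, le_div_iff₀ hpos, inv_mul_eq_div]
  exact pow_div_factorial_le_exp _ (Nat.cast_nonneg k) k

theorem choose_mul_choose_mul_inv_pow_le {n k : ℕ} (t : ℕ) (hkn : k ≤ n) :
    (t.choose k : ℝ) * (n + k - 1).choose k * (n : ℝ)⁻¹ ^ k ≤
      (2 * exp 1 ^ 2 * t / k ^ 2) ^ k := by
  have h2n : ((n + k - 1 : ℕ) : ℝ) ≤ 2 * n := by norm_cast; omega
  calc _ ≤ (t ^ k / k.factorial) * ((2 * n) ^ k / k.factorial) * (n : ℝ)⁻¹ ^ k := by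
        gcongr
        · exact Nat.choose_le_pow_div k t
        · exact (Nat.choose_le_pow_div k _).trans (by gcongr)
    _ = (2 * t) ^ k * (n * (n : ℝ)⁻¹) ^ k * (k.factorial : ℝ)⁻¹ ^ 2 := by ring
    _ ≤ (2 * t) ^ k * 1 ^ k * (exp 1 ^ k / k ^ k) ^ 2 := by
        gcongr
        · exact mul_inv_le_one
        · exact inv_factorial_le_exp_div_pow k
    _ = _ := by ring

theorem ProbabilityTheory.iIndepFun.measureReal_forall_eq {Ω ι β : Type*} [MeasurableSpace Ω]
    {μ : Measure Ω} [Fintype ι] [MeasurableSpace β] [MeasurableSingletonClass β]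
    {Y : ι → Ω → β} (hY : iIndepFun Y μ) (b : ι → β) :
    μ.real {ω | ∀ i, Y i ω = b i} = ∏ i, μ.real {ω | Y i ω = b i} := by
  have hprod := hY.measure_inter_preimage_eq_mul univ (sets := fun i => {b i})
    fun _ _ => measurableSet_singleton _
  simp only [mem_univ, Set.iInter_true] at hprod
  calc μ.real {ω | ∀ i, Y i ω = b i} = μ.real (⋂ i, Y i ⁻¹' {b i}) := by congr 1; ext; simp
    _ = _ := by simp only [measureReal_def, hprod, ENNReal.toReal_prod]; rfl

theorem measureReal_antitone_le_choose {Ω : Type*} [MeasurableSpace Ω] {μ : Measure Ω}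
    [IsFiniteMeasure μ] {n k : ℕ} {Y : Fin k → Ω → ℕ} (hY : iIndepFun Y μ)
    (hunif : ∀ i m, μ {ω | Y i ω = m} = if m ∈ Icc 1 n then (n : ENNReal)⁻¹ else 0) :
    μ.real {ω | Antitone fun i => Y i ω} ≤ (n + k - 1).choose k * (n : ℝ)⁻¹ ^ k := by
  classical
  set M := {m ∈ Fintype.piFinset fun _ : Fin k => Icc 1 n | Antitone m}
  have hout : μ (⋃ i, {ω | Y i ω ∉ Icc 1 n}) = 0 := by
    refine measure_iUnion_null fun i => ?_
    have hcover : {ω | Y i ω ∉ Icc 1 n} = ⋃ m ∈ {m | m ∉ Icc 1 n}, {ω | Y i ω = m} := by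
      ext; simp
    rw [hcover, measure_biUnion_null_iff (Set.to_countable _)]
    intro m hm
    rw [hunif, if_neg hm]
  have hpattern : ∀ m ∈ M, μ.real {ω | ∀ i, Y i ω = m i} = (n : ℝ)⁻¹ ^ k := by
    intro m hm
    have hm' := Fintype.mem_piFinset.1 (mem_filter.1 hm).1
    simp only [hY.measureReal_forall_eq, measureReal_def, hunif, hm', if_true,
      ENNReal.toReal_inv, ENNReal.toReal_natCast, prod_const, card_univ, Fintype.card_fin]
  have hsub : {ω | Antitone fun i => Y i ω} ⊆
      (⋃ m ∈ M, {ω | ∀ i, Y i ω = m i}) ∪ ⋃ i, {ω | Y i ω ∉ Icc 1 n} := by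
    intro ω hω
    by_cases h : ∀ i, Y i ω ∈ Icc 1 n
    · have hm : (fun i => Y i ω) ∈ M := mem_filter.2 ⟨Fintype.mem_piFinset.2 h, hω⟩
      exact Set.mem_union_left _ (Set.mem_biUnion hm fun _ => rfl)
    · exact Set.mem_union_right _ (by simpa using h)
  calc μ.real {ω | Antitone fun i => Y i ω}
      ≤ μ.real ((⋃ m ∈ M, {ω | ∀ i, Y i ω = m i}) ∪ ⋃ i, {ω | Y i ω ∉ Icc 1 n}) :=
        measureReal_mono hsub
    _ ≤ ∑ m ∈ M, μ.real {ω | ∀ i, Y i ω = m i} + μ.real (⋃ i, {ω | Y i ω ∉ Icc 1 n}) :=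
        (measureReal_union_le _ _).trans
          (add_le_add_left (measureReal_biUnion_finset_le _ _) _)
    _ = #M * (n : ℝ)⁻¹ ^ k := by
        rw [measureReal_def _ (⋃ i, _), hout, ENNReal.toReal_zero, add_zero,
          sum_congr rfl hpattern, sum_const, nsmul_eq_mul]
    _ ≤ _ := by
        gcongr
        exact_mod_cast card_antitone_piFinset_Icc_le_choose n k

theorem nonincreasing_subsequence_prob_upper_bound_general
    (n k t : ℕ) (hkn : k ≤ n)
    (Ω : Type*) [MeasureSpace Ω] [IsProbabilityMeasure (ℙ : Measure Ω)]
    (X : Fin t → Ω → ℕ)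
    (hindep : iIndepFun X ℙ)
    (hunif : ∀ i m, ℙ {ω | X i ω = m} =
      if m ∈ Finset.Icc 1 n then ((n : ENNReal))⁻¹ else 0) :
    (ℙ {ω | ∃ ι : Fin k → Fin t, StrictMono ι ∧
        Antitone (fun a => X (ι a) ω)}).toReal ≤
      (2 * Real.exp 1 ^ 2 * t / k ^ 2) ^ k := by
  classical
  set G : Finset (Fin k → Fin t) := {ι | StrictMono ι}
  have hsub : {ω | ∃ ι : Fin k → Fin t, StrictMono ι ∧ Antitone (fun a => X (ι a) ω)} ⊆
      ⋃ ι ∈ G, {ω | Antitone fun a => X (ι a) ω} := by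
    rintro ω ⟨ι, hι, hanti⟩
    exact Set.mem_biUnion (by simpa [G] using hι) hanti
  have hG : #G ≤ t.choose k := by
    simpa [G] using card_strictMono_piFinset_le_choose (univ : Finset (Fin t)) k
  calc _ ≤ ∑ ι ∈ G, volume.real {ω | Antitone fun a => X (ι a) ω} :=
        (measureReal_mono hsub (measure_ne_top _ _)).trans (measureReal_biUnion_finset_le _ _)
    _ ≤ ∑ ι ∈ G, ((n + k - 1).choose k * (n : ℝ)⁻¹ ^ k : ℝ) := by
        refine sum_le_sum fun ι hι => measureReal_antitone_le_choose ?_ fun i m => hunif (ι i) m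
        exact hindep.precomp (mem_filter.1 hι).2.injective
    _ ≤ t.choose k * (n + k - 1).choose k * (n : ℝ)⁻¹ ^ k := by
        rw [sum_const, nsmul_eq_mul, mul_assoc]
        gcongr
    _ ≤ _ := choose_mul_choose_mul_inv_pow_le t hkn

/-- Fix integers `n, k, t ≥ 1` with `k ≤ n`, and let `X_1, …, X_t` be i.i.d.
uniform on `{1, …, n}`. Then the probability that `(X_1, …, X_t)` contains a non-increasing
subsequence of length `k` is at most `(2e²t/k²)^k`. -/
theorem nonincreasing_subsequence_prob_upper_bound
    (n k t : ℕ) (hn : 1 ≤ n) (hk : 1 ≤ k) (ht : 1 ≤ t) (hkn : k ≤ n)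
    (Ω : Type*) [MeasureSpace Ω] [IsProbabilityMeasure (ℙ : Measure Ω)]
    (X : Fin t → Ω → ℕ) (hmeas : ∀ i, Measurable (X i))
    (hindep : iIndepFun X ℙ)
    (hunif : ∀ i m, ℙ {ω | X i ω = m} =
      if m ∈ Finset.Icc 1 n then ((n : ENNReal))⁻¹ else 0) :
    (ℙ {ω | ∃ ι : Fin k → Fin t, StrictMono ι ∧
        Antitone (fun a => X (ι a) ω)}).toReal ≤
      (2 * Real.exp 1 ^ 2 * t / k ^ 2) ^ k :=
  nonincreasing_subsequence_prob_upper_bound_general n k t hkn Ω X hindep hunif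
end

section
/- There exists a universal constant c > 0 such that for all integers n, k ≥ 1 with k ≥ n, every integer t with 1 ≤ t ≤ c·n·k, and X_1, ..., X_t i.i.d. uniform on {1, ..., n}, the probability that (X_1, ..., X_t) contains a non-increasing subsequence of length k is at most (16 t / (n k))^{k/2}. -/
/-!
Every length-`k` non-increasing subsequence is witnessed by a choice of `k` positions
(at most `C(t, k) ≤ (e t / k)^k` choices) together with the non-increasing pattern of values
it takes (at most `C(n + k - 1, k) ≤ 2^(n + k - 1) ≤ 4^k` patterns, as `n ≤ k`); by independence
each pair occurs with probability `n^(-k)`. The union bound gives `(4 e t / (n k))^k`, which is at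
most `(16 t / (n k))^(k/2)` as soon as `e² t ≤ n k`, in particular for `t ≤ n k / 8`.
-/

open MeasureTheory ProbabilityTheory Filter
open scoped Classical
open Finset

theorem card_strictMono_piFinset_le {α : Type*} [LinearOrder α] (s : Finset α) (k : ℕ) :
    #{f ∈ Fintype.piFinset (fun _ : Fin k => s) | StrictMono f} ≤ (#s).choose k := by
  calc _ ≤ #(s.powersetCard k) := by
        refine card_le_card_of_injOn (fun f => image f univ) (fun f hf => ?_)
          fun f hf g hg hfg => ?_
        · simp only [mem_coe, mem_filter, Fintype.mem_piFinset] at hf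
          rw [mem_coe, mem_powersetCard, card_image_of_injective _ hf.2.injective, card_univ,
            Fintype.card_fin]
          exact ⟨image_subset_iff.2 fun j _ => hf.1 j, rfl⟩
        · simp only [mem_coe, mem_filter] at hf hg
          exact (hf.2.range_inj hg.2).1 (by simpa using congrArg ((↑) : Finset α → Set α) hfg)
    _ = _ := card_powersetCard k s

theorem card_antitone_piFinset_Icc_le (n k : ℕ) :
    #{m ∈ Fintype.piFinset (fun _ : Fin k => Icc 1 n) | Antitone m} ≤ (n + k - 1).choose k := by
  calc _ ≤ #{f ∈ Fintype.piFinset (fun _ : Fin k => Icc 1 (n + k - 1)) | StrictMono f} := by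
        -- stars and bars: `m` is recovered from its shift `j ↦ m j.rev + j`
        refine card_le_card_of_injOn (fun m j => m j.rev + j) (fun m hm => ?_)
          fun m _ m' _ hmm' => ?_
        · simp only [mem_coe, mem_filter, Fintype.mem_piFinset, mem_Icc] at hm ⊢
          refine ⟨fun j => ?_, fun j j' hjj' => ?_⟩
          · have := hm.1 j.rev
            omega
          · show m j.rev + j < m j'.rev + j'
            have := hm.2 (Fin.rev_le_rev.2 hjj'.le)
            have : (j : ℕ) < j' := hjj'
            omega
        · funext j
          have := congrFun hmm' j.rev
          simp only [Fin.rev_rev] at this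
          omega
    _ ≤ _ := by
        simpa using card_strictMono_piFinset_le (Icc 1 (n + k - 1)) k

theorem choose_le_exp_mul_div_pow (t k : ℕ) :
    (t.choose k : ℝ) ≤ (Real.exp 1 * t / k) ^ k := by
  rcases k.eq_zero_or_pos with rfl | hk
  · simp
  have hfac : (k : ℝ) ^ k / k.factorial ≤ Real.exp 1 ^ k := by
    simpa [← Real.exp_nat_mul] using Real.pow_div_factorial_le_exp _ (Nat.cast_nonneg k) k
  calc (t.choose k : ℝ) ≤ t ^ k / k.factorial := Nat.choose_le_pow_div k t
    _ = t ^ k / k ^ k * (k ^ k / k.factorial) := by field_simp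
    _ ≤ t ^ k / k ^ k * Real.exp 1 ^ k := by gcongr
    _ = _ := by rw [div_pow, mul_pow]; ring

theorem pow_le_rpow_half_of_sq_le {a b : ℝ} (hb : 0 ≤ b) (h : b ^ 2 ≤ a) (k : ℕ) :
    b ^ k ≤ a ^ ((k : ℝ) / 2) := by
  calc b ^ k = (b ^ 2) ^ ((k : ℝ) / 2) := by
        rw [← Real.rpow_natCast b 2, ← Real.rpow_mul hb, Nat.cast_ofNat,
          mul_div_cancel₀ _ two_ne_zero, Real.rpow_natCast]
    _ ≤ _ := by gcongr

section Independence

variable {Ω ι β : Type*} [MeasurableSpace Ω] {μ : Measure Ω} {X : ι → Ω → β}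

theorem ae_forall_mem_of_measure_eq_zero [Countable ι] [Countable β] {s : Set β}
    (hX : ∀ i, ∀ b ∉ s, μ {ω | X i ω = b} = 0) : ∀ᵐ ω ∂μ, ∀ i, X i ω ∈ s := by
  refine ae_all_iff.2 fun i => ?_
  have : {ω | X i ω ∉ s} = ⋃ b : ↥sᶜ, {ω | X i ω = b} := by ext; simp
  rw [ae_iff, this]
  exact measure_iUnion_null fun b => hX i b b.2

theorem ProbabilityTheory.iIndepFun.measure_forall_comp_eq {κ : Type*} [Fintype κ]
    [MeasurableSpace β] [MeasurableSingletonClass β] (h : iIndepFun X μ)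
    {g : κ → ι} (hg : g.Injective) (m : κ → β) :
    μ {ω | ∀ j, X (g j) ω = m j} = ∏ j, μ {ω | X (g j) ω = m j} := by
  have := (h.precomp hg).measure_inter_preimage_eq_mul univ (sets := fun j => {m j})
    fun _ _ => measurableSet_singleton _
  simpa [Set.preimage, Set.iInter_ofPred] using this

end Independence

section UniformSequence

variable {Ω : Type*} [MeasurableSpace Ω] {μ : Measure Ω} {n t : ℕ} {X : Fin t → Ω → ℕ}

theorem measure_forall_comp_eq_of_uniform (hindep : iIndepFun X μ)
    (hX : ∀ i m, μ {ω | X i ω = m} = if m ∈ Icc 1 n then (n : ENNReal)⁻¹ else 0)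
    {k : ℕ} {ι : Fin k → Fin t} (hι : ι.Injective) {m : Fin k → ℕ} (hm : ∀ j, m j ∈ Icc 1 n) :
    μ {ω | ∀ j, X (ι j) ω = m j} = (n : ENNReal)⁻¹ ^ k := by
  simp [hindep.measure_forall_comp_eq hι, hX, hm]

theorem measure_exists_antitone_subseq_le (hindep : iIndepFun X μ)
    (hX : ∀ i m, μ {ω | X i ω = m} = if m ∈ Icc 1 n then (n : ENNReal)⁻¹ else 0) (k : ℕ) :
    μ {ω | ∃ ι : Fin k → Fin t, StrictMono ι ∧ Antitone (fun a => X (ι a) ω)} ≤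
      t.choose k * (n + k - 1).choose k * (n : ENNReal)⁻¹ ^ k := by
  let S : Finset (Fin k → Fin t) := {ι | StrictMono ι}
  let M := {m ∈ Fintype.piFinset fun _ : Fin k => Icc 1 n | Antitone m}
  have hS : #S ≤ t.choose k := by
    simpa [S] using card_strictMono_piFinset_le (univ : Finset (Fin t)) k
  have hM : #M ≤ (n + k - 1).choose k := card_antitone_piFinset_Icc_le n k
  have hae : ∀ᵐ ω ∂μ, ∀ i, X i ω ∈ Icc 1 n :=
    ae_forall_mem_of_measure_eq_zero fun i b hb => by rw [hX, if_neg (show b ∉ Icc 1 n from hb)]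
  calc _ ≤ μ (⋃ ι ∈ S, ⋃ m ∈ M, {ω | ∀ j, X (ι j) ω = m j}) := by
        refine measure_mono_ae (hae.mono fun ω hω hE => ?_)
        obtain ⟨ι, hι, hanti⟩ := hE
        have hm : (fun j => X (ι j) ω) ∈ M := by
          simpa [M] using ⟨fun j => mem_Icc.1 (hω _), hanti⟩
        exact Set.mem_iUnion₂.2 ⟨ι, by simpa [S] using hι,
          Set.mem_iUnion₂.2 ⟨_, hm, fun j => rfl⟩⟩
    _ ≤ ∑ ι ∈ S, ∑ m ∈ M, μ {ω | ∀ j, X (ι j) ω = m j} :=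
        (measure_biUnion_finset_le _ _).trans (sum_le_sum fun _ _ => measure_biUnion_finset_le _ _)
    _ = ∑ ι ∈ S, ∑ m ∈ M, (n : ENNReal)⁻¹ ^ k := by
        refine sum_congr rfl fun ι hι => sum_congr rfl fun m hm => ?_
        simp only [S, M, mem_filter, Fintype.mem_piFinset] at hι hm
        exact measure_forall_comp_eq_of_uniform hindep hX hι.2.injective hm.1
    _ ≤ _ := by
        simp only [sum_const, nsmul_eq_mul, ← mul_assoc]
        gcongr

end UniformSequence

/-- There is a universal constant `c > 0` such that for all integers
`n, k ≥ 1` with `k ≥ n`, every integer `t` with `1 ≤ t ≤ c·n·k`, and `X_1, …, X_t` i.i.d.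
uniform on `{1, …, n}`, the probability that `(X_1, …, X_t)` contains a non-increasing
subsequence of length `k` is at most `(16t/(nk))^{k/2}`. -/
theorem nonincreasing_subsequence_prob_upper_bound_large_k :
    ∃ c : ℝ, 0 < c ∧
      ∀ (n k : ℕ), 1 ≤ n → 1 ≤ k → n ≤ k →
      ∀ t : ℕ, 1 ≤ t → (t : ℝ) ≤ c * n * k →
      ∀ (Ω : Type) (_ : MeasureSpace Ω) (_ : IsProbabilityMeasure (ℙ : Measure Ω))
        (X : Fin t → Ω → ℕ), (∀ i, Measurable (X i)) →
        iIndepFun X ℙ →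
        (∀ i m, ℙ {ω | X i ω = m} =
          if m ∈ Finset.Icc 1 n then ((n : ENNReal))⁻¹ else 0) →
        (ℙ {ω | ∃ ι : Fin k → Fin t, StrictMono ι ∧
            Antitone (fun a => X (ι a) ω)}).toReal ≤
          (16 * (t : ℝ) / ((n : ℝ) * k)) ^ ((k : ℝ) / 2) := by
  refine ⟨1 / 8, by norm_num, fun n k hn hk hnk t _ htnk Ω _ _ X _ hindep hX => ?_⟩
  have hn0 : (0 : ℝ) < n := by exact_mod_cast hn
  have hk0 : (0 : ℝ) < k := by exact_mod_cast hk
  have hchoose : ((n + k - 1).choose k : ℝ) ≤ 4 ^ k := by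
    have : (n + k - 1).choose k ≤ 2 ^ (2 * k) :=
      (Nat.choose_le_two_pow _ _).trans (Nat.pow_le_pow_right two_pos (by omega))
    rw [pow_mul] at this
    exact_mod_cast this
  have hexp : Real.exp 1 ^ 2 * t ≤ n * k := by
    have : Real.exp 1 ^ 2 ≤ 8 := by nlinarith [Real.exp_one_lt_d9, Real.exp_pos 1]
    nlinarith
  calc _ ≤ t.choose k * (n + k - 1).choose k * (n : ℝ)⁻¹ ^ k := by
        simpa using ENNReal.toReal_mono (by simp [ENNReal.mul_eq_top, Nat.one_le_iff_ne_zero.1 hn])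
          (measure_exists_antitone_subseq_le hindep hX k)
    _ ≤ (Real.exp 1 * t / k) ^ k * 4 ^ k * (n : ℝ)⁻¹ ^ k := by
        gcongr
        exact choose_le_exp_mul_div_pow t k
    _ = (4 * Real.exp 1 * t / (n * k)) ^ k := by
        rw [← mul_pow, ← mul_pow]; field_simp
    _ ≤ _ := by
        refine pow_le_rpow_half_of_sq_le (by positivity) ?_ k
        rw [div_pow, div_le_div_iff₀ (by positivity) (by positivity)]
        calc (4 * Real.exp 1 * t) ^ 2 * (n * k) = 16 * t * (n * k) * (Real.exp 1 ^ 2 * t) := by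
              ring
          _ ≤ 16 * t * (n * k) * (n * k : ℝ) := by gcongr
          _ = _ := by ring
end

section
/- There exists a universal constant C > 0 such that for all integers n, k ≥ 1, every integer t ≥ C·k^2, and X_1, ..., X_t i.i.d. uniform on {1, ..., n}, the probability that (X_1, ..., X_t) contains NO non-increasing subsequence of length k is at most e^{−t}. -/
open MeasureTheory ProbabilityTheory Finset
open scoped Nat

/-!
Label each index `i` by the length `h i` of the longest non-increasing subsequence ending at `i`.
If `i < j` and `v j ≤ v i` then `h i < h j`, so when there is no non-increasing subsequence of
length `k` the labels take at most `k - 1` values and `v` is strictly increasing on every label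
class. A strictly increasing sequence is determined by its set of values, so for a fixed labelling
with class sizes `m c` there are at most `∏ c, n.choose (m c)` such sequences with values in
`{1, …, n}`, and `(∏ c, n.choose (m c)) * t ! ≤ (k - 1) ^ t * n ^ t` since the multinomial
coefficient is at most `(k - 1) ^ t`. Summing over the `(k - 1) ^ t` labellings, the probability
is at most `(k - 1) ^ (2 t) / t ! ≤ (e (k - 1) ^ 2 / t) ^ t`, which is at most `e ^ (-t)` once
`t ≥ e ^ 2 k ^ 2`.
-/

section AntitoneSubsequence

variable {ι α : Type*} [LinearOrder ι] [LinearOrder α]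

def HasAntitoneSubseq (k : ℕ) (v : ι → α) : Prop :=
  ∃ e : Fin k → ι, StrictMono e ∧ Antitone (v ∘ e)

theorem AntitoneOn.hasAntitoneSubseq {v : ι → α} {s : Finset ι} (hs : AntitoneOn v s)
    {k : ℕ} (hk : k ≤ #s) : HasAntitoneSubseq k v :=
  ⟨s.orderEmbOfFin rfl ∘ Fin.castLE hk,
    (s.orderEmbOfFin rfl).strictMono.comp (Fin.strictMono_castLE hk),
    fun _ _ hab => hs (s.orderEmbOfFin_mem rfl _) (s.orderEmbOfFin_mem rfl _)
      ((s.orderEmbOfFin rfl).monotone ((Fin.castLE_le_castLE_iff hk).2 hab))⟩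

variable [Fintype ι]

open Classical in
noncomputable def antitoneHeight (v : ι → α) (i : ι) : ℕ :=
  ({s : Finset ι | i ∈ s ∧ (∀ j ∈ s, j ≤ i) ∧ AntitoneOn v s} : Finset (Finset ι)).sup card

variable {v : ι → α}

theorem exists_antitoneOn_card_eq_antitoneHeight (v : ι → α) (i : ι) :
    ∃ s : Finset ι, i ∈ s ∧ (∀ j ∈ s, j ≤ i) ∧ AntitoneOn v s ∧ #s = antitoneHeight v i := by
  classical
  obtain ⟨s, hs, hsup⟩ := exists_mem_eq_sup
    ({s : Finset ι | i ∈ s ∧ (∀ j ∈ s, j ≤ i) ∧ AntitoneOn v s} : Finset (Finset ι))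
    ⟨{i}, by simp⟩ card
  simp only [mem_filter, mem_univ, true_and] at hs
  exact ⟨s, hs.1, hs.2.1, hs.2.2, by rw [antitoneHeight]; convert hsup.symm⟩

theorem card_le_antitoneHeight {i : ι} {s : Finset ι} (hi : i ∈ s) (hs : ∀ j ∈ s, j ≤ i)
    (hv : AntitoneOn v s) : #s ≤ antitoneHeight v i := by
  classical
  exact le_sup (f := card) (by simpa using ⟨hi, hs, hv⟩)

theorem one_le_antitoneHeight (v : ι → α) (i : ι) : 1 ≤ antitoneHeight v i :=
  card_le_antitoneHeight (mem_singleton_self i) (by simp) (by simp)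

theorem antitoneHeight_lt_of_lt {i j : ι} (hij : i < j) (hv : v j ≤ v i) :
    antitoneHeight v i < antitoneHeight v j := by
  classical
  obtain ⟨s, his, hsi, hs, hcard⟩ := exists_antitoneOn_card_eq_antitoneHeight v i
  have hjs : j ∉ s := fun hj => (hsi j hj).not_gt hij
  rw [← hcard, Nat.lt_iff_add_one_le, ← card_insert_of_notMem hjs]
  refine card_le_antitoneHeight (mem_insert_self j s) ?_ ?_
  · simpa using fun a ha => (hsi a ha).trans hij.le
  · rw [coe_insert, Set.antitoneOn_insert_iff]
    refine ⟨fun b hb _ => hv.trans (hs hb his (hsi b hb)), fun b hb hjb => ?_, hs⟩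
    exact absurd (hjb.trans (hsi b hb)) hij.not_ge

theorem hasAntitoneSubseq_of_le_antitoneHeight {k : ℕ} {i : ι} (hk : k ≤ antitoneHeight v i) :
    HasAntitoneSubseq k v := by
  obtain ⟨s, -, -, hs, hcard⟩ := exists_antitoneOn_card_eq_antitoneHeight v i
  exact hs.hasAntitoneSubseq (hcard ▸ hk)

theorem exists_strictMonoOn_fibers_of_not_hasAntitoneSubseq {k : ℕ}
    (hv : ¬ HasAntitoneSubseq k v) : ∃ f : ι → Fin (k - 1), ∀ c, StrictMonoOn v (f ⁻¹' {c}) := by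
  have hlt (i : ι) : antitoneHeight v i - 1 < k - 1 := by
    have := one_le_antitoneHeight v i
    have := mt (hasAntitoneSubseq_of_le_antitoneHeight (i := i)) hv
    omega
  refine ⟨fun i => ⟨antitoneHeight v i - 1, hlt i⟩, fun c i hi j hj hij => ?_⟩
  have hji : antitoneHeight v i = antitoneHeight v j := by
    have : antitoneHeight v i - 1 = antitoneHeight v j - 1 := Fin.val_eq_of_eq (hi.trans hj.symm)
    have := one_le_antitoneHeight v i
    have := one_le_antitoneHeight v j
    omega
  by_contra! hvji
  exact (antitoneHeight_lt_of_lt hij hvji).ne hji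

end AntitoneSubsequence

section Counting

theorem Nat.multinomial_univ_le_card_pow {κ : Type*} [Fintype κ] (m : κ → ℕ) :
    Nat.multinomial univ m ≤ Fintype.card κ ^ ∑ c, m c := by
  classical
  have hpow := sum_pow_eq_sum_piAntidiag (univ : Finset κ) (fun _ => (1 : ℕ)) (∑ c, m c)
  simp only [one_pow, prod_const_one, mul_one, sum_const, smul_eq_mul, Nat.cast_id] at hpow
  rw [← Finset.card_univ, hpow]
  exact single_le_sum (f := fun k => Nat.multinomial univ k) (fun _ _ => Nat.zero_le _)
    (mem_piAntidiag.2 ⟨rfl, fun c _ => mem_univ c⟩)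

theorem prod_choose_mul_factorial_le {κ : Type*} [Fintype κ] (N : ℕ) (m : κ → ℕ) :
    (∏ c, N.choose (m c)) * (∑ c, m c)! ≤ Fintype.card κ ^ (∑ c, m c) * N ^ (∑ c, m c) := by
  calc (∏ c, N.choose (m c)) * (∑ c, m c)!
      = (∏ c, N.descFactorial (m c)) * Nat.multinomial univ m := by
        rw [← Nat.multinomial_spec, ← mul_assoc, ← prod_mul_distrib]
        simp only [Nat.descFactorial_eq_factorial_mul_choose, mul_comm]
    _ ≤ N ^ (∑ c, m c) * Fintype.card κ ^ (∑ c, m c) := by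
        rw [← prod_pow_eq_pow_sum]
        gcongr with c
        · exact Nat.descFactorial_le_pow N (m c)
        · exact Nat.multinomial_univ_le_card_pow m
    _ = _ := mul_comm _ _

theorem StrictMonoOn.eqOn_of_image_eq {β γ : Type*} [LinearOrder β] [WellFoundedLT β] [Preorder γ]
    {f g : β → γ} {s : Set β} (hf : StrictMonoOn f s) (hg : StrictMonoOn g s)
    (h : f '' s = g '' s) : s.EqOn f g := by
  have hfg : f ∘ Subtype.val = g ∘ (Subtype.val : s → β) :=
    Set.range_injOn_strictMono hf.strictMono hg.strictMono
      (by simpa only [Set.range_comp, Subtype.range_coe] using h)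
  exact fun x hx => congrFun hfg ⟨x, hx⟩

theorem card_le_prod_choose {ι κ α : Type*} [LinearOrder ι] [Fintype ι] [Fintype κ]
    [DecidableEq κ] [LinearOrder α] (f : ι → κ) (s : Finset α) {B : Finset (ι → α)}
    (hB : ∀ v ∈ B, (∀ i, v i ∈ s) ∧ ∀ c, StrictMonoOn v (f ⁻¹' {c})) :
    #B ≤ ∏ c, (#s).choose #{i | f i = c} := by
  have hfiber (c : κ) : (({i | f i = c} : Finset ι) : Set ι) = f ⁻¹' {c} := by ext; simp
  calc #B ≤ #(Fintype.piFinset fun c => s.powersetCard #{i | f i = c}) := by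
        refine card_le_card_of_injOn (fun v c => ({i | f i = c} : Finset ι).image v) ?_ ?_
        · intro v hv
          simp only [mem_coe, Fintype.mem_piFinset, mem_powersetCard]
          intro c
          refine ⟨fun a ha => ?_, card_image_of_injOn ?_⟩
          · obtain ⟨i, -, rfl⟩ := mem_image.1 ha
            exact (hB v hv).1 i
          · rw [hfiber]; exact ((hB v hv).2 c).injOn
        · intro v hv w hw hvw
          funext i
          have himage := congrFun hvw (f i)
          apply_fun ((↑) : Finset α → Set α) at himage
          simp only [coe_image, hfiber] at himage
          exact ((hB v hv).2 (f i)).eqOn_of_image_eq ((hB w hw).2 (f i)) himage rfl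
    _ = ∏ c, (#s).choose #{i | f i = c} := by simp

theorem card_mul_factorial_le_of_not_hasAntitoneSubseq {ι α : Type*} [LinearOrder ι] [Fintype ι]
    [LinearOrder α] (s : Finset α) (k : ℕ) {B : Finset (ι → α)}
    (hB : ∀ v ∈ B, (∀ i, v i ∈ s) ∧ ¬ HasAntitoneSubseq k v) :
    #B * (Fintype.card ι)! ≤ ((k - 1) ^ 2) ^ Fintype.card ι * #s ^ Fintype.card ι := by
  classical
  set t := Fintype.card ι
  let incr (f : ι → Fin (k - 1)) : Finset (ι → α) := {v ∈ B | ∀ c, StrictMonoOn v (f ⁻¹' {c})}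
  have hcover : B ⊆ univ.biUnion incr := fun v hv => by
    obtain ⟨f, hf⟩ := exists_strictMonoOn_fibers_of_not_hasAntitoneSubseq (hB v hv).2
    exact mem_biUnion.2 ⟨f, mem_univ f, mem_filter.2 ⟨hv, hf⟩⟩
  have hincr (f : ι → Fin (k - 1)) : #(incr f) * t ! ≤ (k - 1) ^ t * #s ^ t := by
    have hsum : ∑ c, #{i | f i = c} = t :=
      (card_eq_sum_card_fiberwise fun i _ => mem_univ (f i)).symm
    calc #(incr f) * t ! ≤ (∏ c, (#s).choose #{i | f i = c}) * t ! :=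
          Nat.mul_le_mul_right _ (card_le_prod_choose f s fun v hv =>
            ⟨(hB v (mem_filter.1 hv).1).1, (mem_filter.1 hv).2⟩)
      _ ≤ (k - 1) ^ t * #s ^ t := by
          simpa [hsum] using prod_choose_mul_factorial_le (#s) fun c => #{i | f i = c}
  calc #B * t ! ≤ (∑ f : ι → Fin (k - 1), #(incr f)) * t ! :=
        Nat.mul_le_mul_right _ ((card_le_card hcover).trans card_biUnion_le)
    _ ≤ ∑ _f : ι → Fin (k - 1), (k - 1) ^ t * #s ^ t := by
        rw [sum_mul]; exact sum_le_sum fun f _ => hincr f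
    _ = ((k - 1) ^ 2) ^ t * #s ^ t := by
        simp [t, sq, mul_pow, mul_assoc]

end Counting

section Probability

variable {Ω α : Type*} [MeasurableSpace Ω] {μ : Measure Ω}

theorem ae_mem_of_measure_eq_zero [Countable α] {X : Ω → α} {s : Set α}
    (h : ∀ a ∉ s, μ {ω | X ω = a} = 0) : ∀ᵐ ω ∂μ, X ω ∈ s := by
  have hae : ∀ᵐ ω ∂μ, ∀ a, X ω = a → a ∈ s := by
    refine ae_all_iff.2 fun a => ?_
    by_cases ha : a ∈ s
    · exact ae_of_all _ fun _ _ => ha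
    · filter_upwards [measure_eq_zero_iff_ae_notMem.1 (h a ha)] with ω hω hωa
      exact absurd hωa hω
  filter_upwards [hae] with ω hω using hω _ rfl

theorem measure_le_card_mul_of_ae_mem {ι : Type*} {X : ι → Ω → α} {A : Set Ω}
    {B : Finset (ι → α)} {p : ENNReal} (hAB : ∀ᵐ ω ∂μ, ω ∈ A → (X · ω) ∈ B)
    (hp : ∀ v ∈ B, μ {ω | ∀ i, X i ω = v i} ≤ p) : μ A ≤ #B * p := by
  calc μ A ≤ μ (⋃ v ∈ B, {ω | ∀ i, X i ω = v i}) := by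
        refine measure_mono_ae ?_
        filter_upwards [hAB] with ω hω hωA
        exact Set.mem_biUnion (hω hωA) fun _ => rfl
    _ ≤ ∑ v ∈ B, μ {ω | ∀ i, X i ω = v i} := measure_biUnion_finset_le B _
    _ ≤ ∑ _v ∈ B, p := sum_le_sum hp
    _ = #B * p := by rw [sum_const, nsmul_eq_mul]

theorem ProbabilityTheory.iIndepFun.measure_forall_eq {ι : Type*} [Fintype ι] [MeasurableSpace α]
    [MeasurableSingletonClass α] {X : ι → Ω → α} (h : iIndepFun X μ) (v : ι → α) :
    μ {ω | ∀ i, X i ω = v i} = ∏ i, μ {ω | X i ω = v i} := by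
  have hset : {ω | ∀ i, X i ω = v i} = ⋂ i ∈ univ, X i ⁻¹' {v i} := by ext; simp
  rw [hset, h.measure_inter_preimage_eq_mul univ fun i _ => measurableSet_singleton (v i)]
  rfl

theorem ProbabilityTheory.iIndepFun.measure_setOf_le_card_mul_pow {ι : Type*} [Fintype ι]
    [DecidableEq ι] [DecidableEq α] [Countable α] [MeasurableSpace α] [MeasurableSingletonClass α] {X : ι → Ω → α}
    (hX : iIndepFun X μ) {s : Finset α} {p : ENNReal}
    (hunif : ∀ i a, μ {ω | X i ω = a} = if a ∈ s then p else 0)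
    (P : (ι → α) → Prop) [DecidablePred P] :
    μ {ω | P (X · ω)} ≤ #{v ∈ Fintype.piFinset fun _ => s | P v} * p ^ Fintype.card ι := by
  have hrange : ∀ᵐ ω ∂μ, ∀ i, X i ω ∈ s := ae_all_iff.2 fun i =>
    ae_mem_of_measure_eq_zero fun a ha => by rw [hunif, if_neg (mt mem_coe.2 ha)]
  refine measure_le_card_mul_of_ae_mem (X := X) ?_ fun v hv => ?_
  · filter_upwards [hrange] with ω hω hP
    exact mem_filter.2 ⟨Fintype.mem_piFinset.2 hω, hP⟩
  · have hvs : ∀ i, v i ∈ s := Fintype.mem_piFinset.1 (mem_filter.1 hv).1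
    simp [hX.measure_forall_eq, hunif, hvs]

end Probability

theorem Real.pow_div_factorial_le_exp_neg {x : ℝ} {t : ℕ} (hx : 0 ≤ x)
    (ht : Real.exp 2 * x ≤ t) : x ^ t / t ! ≤ Real.exp (-t) := by
  rcases t.eq_zero_or_pos with rfl | htpos
  · simp
  have htpos' : (0 : ℝ) < t := by exact_mod_cast htpos
  have hratio : Real.exp 1 * x / t ≤ (Real.exp 1)⁻¹ := by
    rw [div_le_iff₀ htpos']
    calc Real.exp 1 * x = (Real.exp 1)⁻¹ * (Real.exp 2 * x) := by
          rw [← mul_assoc, ← Real.exp_neg, ← Real.exp_add]; norm_num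
      _ ≤ (Real.exp 1)⁻¹ * t := by gcongr
  calc x ^ t / t ! = (x / t) ^ t * ((t : ℝ) ^ t / t !) := by
        rw [div_pow]; field_simp
    _ ≤ (x / t) ^ t * Real.exp t := by
        gcongr; exact Real.pow_div_factorial_le_exp _ htpos'.le t
    _ = (Real.exp 1 * x / t) ^ t := by
        rw [mul_div_assoc, mul_pow, ← Real.exp_nat_mul, mul_one, mul_comm]
    _ ≤ ((Real.exp 1)⁻¹) ^ t := by gcongr
    _ = Real.exp (-t) := by rw [← Real.exp_neg, ← Real.exp_nat_mul]; ring_nf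

/-- There is a universal constant `C > 0` such that for all integers
`n, k ≥ 1`, every integer `t ≥ C·k²`, and `X_1, …, X_t` i.i.d. uniform on `{1, …, n}`, the
probability that `(X_1, …, X_t)` contains NO non-increasing subsequence of length `k` is at
most `e^{-t}`. -/
theorem no_nonincreasing_subsequence_prob_upper_bound :
    ∃ C : ℝ, 0 < C ∧
      ∀ (n k : ℕ), 1 ≤ n → 1 ≤ k →
      ∀ t : ℕ, C * (k : ℝ) ^ 2 ≤ (t : ℝ) →
      ∀ (Ω : Type) (_ : MeasureSpace Ω) (_ : IsProbabilityMeasure (ℙ : Measure Ω))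
        (X : Fin t → Ω → ℕ), (∀ i, Measurable (X i)) →
        iIndepFun X ℙ →
        (∀ i m, ℙ {ω | X i ω = m} =
          if m ∈ Finset.Icc 1 n then ((n : ENNReal))⁻¹ else 0) →
        (ℙ {ω | ¬ ∃ ι : Fin k → Fin t, StrictMono ι ∧
            Antitone (fun a => X (ι a) ω)}).toReal ≤
          Real.exp (-(t : ℝ)) := by
  refine ⟨Real.exp 2, Real.exp_pos 2, ?_⟩
  intro n k hn _ t ht Ω _ _ X _ hindep hunif
  classical
  set B : Finset (Fin t → ℕ) :=
    {v ∈ Fintype.piFinset fun _ => Icc 1 n | ¬ HasAntitoneSubseq k v}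
  have hP : ℙ {ω | ¬ HasAntitoneSubseq k (X · ω)} ≤ #B * (n : ENNReal)⁻¹ ^ t := by
    simpa using hindep.measure_setOf_le_card_mul_pow hunif (¬ HasAntitoneSubseq k ·)
  have hcount : #B * t ! ≤ ((k - 1) ^ 2) ^ t * n ^ t := by
    simpa using card_mul_factorial_le_of_not_hasAntitoneSubseq (Icc 1 n) k (B := B)
      fun v hv => ⟨Fintype.mem_piFinset.1 (mem_filter.1 hv).1, (mem_filter.1 hv).2⟩
  have hk : Real.exp 2 * (((k - 1 : ℕ) : ℝ) ^ 2) ≤ t := by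
    refine le_trans ?_ ht
    gcongr
    exact_mod_cast Nat.sub_le k 1
  have hnpos : (0 : ℝ) < n ^ t := by positivity
  have hfinite : (#B * (n : ENNReal)⁻¹ ^ t) ≠ ⊤ :=
    ENNReal.mul_ne_top (ENNReal.natCast_ne_top _)
      (ENNReal.pow_ne_top (ENNReal.inv_ne_top.2 (Nat.cast_ne_zero.2 (by omega))))
  calc _ ≤ (#B * (n : ENNReal)⁻¹ ^ t).toReal := ENNReal.toReal_mono hfinite hP
    _ = (#B : ℝ) / n ^ t := by simp [div_eq_mul_inv]
    _ ≤ (((k - 1 : ℕ) : ℝ) ^ 2) ^ t / t ! := by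
        rw [div_le_div_iff₀ hnpos (by positivity)]
        exact_mod_cast hcount
    _ ≤ Real.exp (-t) := Real.pow_div_factorial_le_exp_neg (by positivity) hk
end

section
/- There exist universal constants 0 < c_L < c_U such that for every fixed integer n ≥ 1, P( c_L · k · n ≤ T(n, k) ≤ c_U · k · n ) → 1 as k → ∞. -/
open MeasureTheory ProbabilityTheory Filter

/-- Deterministic column heights of the CD message grid driven by the selection sequence `x`
(selections are `x 1, x 2, …`): `gridH x t i` is the height of column `i` after `t` steps. -/
def gridH (x : ℕ → ℕ) : ℕ → ℕ → ℕ
  | 0, _ => 0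
  | (t + 1), i =>
      if i ≤ x (t + 1) then max (gridH x t i) (gridH x t (x (t + 1)) + 1) else gridH x t i

/-- The set of columns (among `{1, …, n}`) that are not yet full (height `< k`) at time `t`. -/
def activeCols (n k : ℕ) (x : ℕ → ℕ) (t : ℕ) : Finset ℕ :=
  (Finset.Icc 1 n).filter fun i => gridH x t i < k

/-- `fillTime n k X ω` is the first time `t` at which every column of the `n × k` message grid
is full, for the realized selection sequence `ω ↦ X · ω`. -/
noncomputable def fillTime {Ω : Type*} (n k : ℕ) (X : ℕ → Ω → ℕ) (ω : Ω) : ℕ :=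
  sInf {t | ∀ i ∈ Finset.Icc 1 n, gridH (fun s => X s ω) t i = k}

/-- `X` is a (random) selection process for the `n × k` message grid of the CD heuristic:
the selections `X 1, X 2, …` are measurable, and conditionally on the history
`X 1 = x 1, …, X t = x t` (an event of positive probability, with at least one non-full
column), the next selection `X (t+1)` is uniformly distributed on the set of non-full
columns. -/
def IsGridProcess {Ω : Type*} [MeasureSpace Ω] (n k : ℕ) (X : ℕ → Ω → ℕ) : Prop :=
  (∀ t, Measurable (X t)) ∧
    ∀ (t : ℕ) (x : ℕ → ℕ),
      ℙ {ω | ∀ s, 1 ≤ s → s ≤ t → X s ω = x s} ≠ 0 →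
      (activeCols n k x t).Nonempty →
      ∀ j : ℕ,
        ProbabilityTheory.cond ℙ {ω | ∀ s, 1 ≤ s → s ≤ t → X s ω = x s}
            {ω | X (t + 1) ω = j} =
          if j ∈ activeCols n k x t then ((activeCols n k x t).card : ENNReal)⁻¹ else 0

/-!
The upper bound is deterministic: while some column is not full, the selected column is a
non-full one, so the total height grows by at least one per step and the grid is full after at
most `k n` steps. For the lower bound, column `1` reaching height `k` by time `M` forces `k`
selections at times in `[1, M]` with non-increasing columns, each made while column `1`, hence
every column, was not full, that is while the selection was uniform on all `n` columns. A
prescribed such chain has probability at most `n⁻ᵏ`, there are at most `C(M, k) (k + 1)ⁿ` of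
them, and for `M = ⌊k n / 8⌋` the union bound gives `(k + 1)ⁿ (e / 8)ᵏ → 0`.
-/

open Finset
open scoped ENNReal

section Deterministic

variable {x : ℕ → ℕ} {n k : ℕ}

lemma gridH_le_gridH_succ (x : ℕ → ℕ) (t i : ℕ) : gridH x t i ≤ gridH x (t + 1) i := by
  simp only [gridH]
  split_ifs
  exacts [le_max_left _ _, le_rfl]

lemma monotone_gridH_time (x : ℕ → ℕ) (i : ℕ) : Monotone fun t => gridH x t i :=
  monotone_nat_of_le_succ fun t => gridH_le_gridH_succ x t i

lemma antitone_gridH (x : ℕ → ℕ) (t : ℕ) : Antitone (gridH x t) := by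
  induction t with
  | zero => exact fun _ _ _ => le_rfl
  | succ t ih =>
    intro i j hij
    simp only [gridH]
    split_ifs with hj hi hi
    · exact max_le_max (ih hij) le_rfl
    · omega
    · exact (ih hij).trans (le_max_left _ _)
    · exact ih hij

lemma gridH_congr {y : ℕ → ℕ} {t : ℕ} (h : ∀ s, 1 ≤ s → s ≤ t → x s = y s) :
    gridH x t = gridH y t := by
  induction t with
  | zero => rfl
  | succ t ih =>
    have ih := ih fun s h1 h2 => h s h1 (h2.trans t.le_succ)
    funext i
    simp only [gridH, ih, h (t + 1) (Nat.le_add_left 1 t) le_rfl]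

lemma activeCols_congr {y : ℕ → ℕ} {t : ℕ} (h : ∀ s, 1 ≤ s → s ≤ t → x s = y s) :
    activeCols n k x t = activeCols n k y t := by
  simp only [activeCols, gridH_congr h]

lemma activeCols_eq_Icc {t : ℕ} (h : gridH x t 1 < k) : activeCols n k x t = Icc 1 n :=
  filter_true_of_mem fun _ hi => (antitone_gridH x t (mem_Icc.1 hi).1).trans_lt h

lemma exists_chain_of_le_gridH (x : ℕ → ℕ) (t : ℕ) :
    ∀ {c i : ℕ}, c ≤ gridH x t i → ∃ S : Finset ℕ, #S = c ∧ S ⊆ Icc 1 t ∧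
      AntitoneOn x S ∧ ∀ a ∈ S, i ≤ x a ∧ gridH x (a - 1) i < c := by
  induction t with
  | zero =>
    intro c _ hc
    obtain rfl : c = 0 := Nat.le_zero.1 hc
    exact ⟨∅, rfl, empty_subset _, by simp [AntitoneOn], by simp⟩
  | succ t ih =>
    intro c i hc
    have widen : Icc 1 t ⊆ Icc 1 (t + 1) := Icc_subset_Icc_right t.le_succ
    by_cases hold : c ≤ gridH x t i
    · obtain ⟨S, hcard, hsub, hanti, hS⟩ := ih hold
      exact ⟨S, hcard, hsub.trans widen, hanti, hS⟩
    have hsel : i ≤ x (t + 1) := by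
      by_contra hsel
      simp only [gridH, if_neg hsel] at hc
      exact hold hc
    have hc' : c - 1 ≤ gridH x t (x (t + 1)) := by
      simp only [gridH, if_pos hsel] at hc
      omega
    obtain ⟨S, hcard, hsub, hanti, hS⟩ := ih hc'
    have hnew : t + 1 ∉ S := fun h => by simpa using (mem_Icc.1 (hsub h)).2
    refine ⟨insert (t + 1) S, by rw [card_insert_of_notMem hnew]; omega,
      insert_subset (by simp) (hsub.trans widen), ?_, ?_⟩
    · intro a ha b hb hab
      simp only [coe_insert, Set.mem_insert_iff, mem_coe] at ha hb
      rcases ha with rfl | ha <;> rcases hb with rfl | hb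
      · exact le_rfl
      · have := (mem_Icc.1 (hsub hb)).2; omega
      · exact (hS a ha).1
      · exact hanti ha hb hab
    · intro a ha
      rcases mem_insert.1 ha with rfl | ha
      · exact ⟨hsel, by simpa using hold⟩
      · have hat : a - 1 ≤ t := by have := (mem_Icc.1 (hsub ha)).2; omega
        exact ⟨hsel.trans (hS a ha).1, (monotone_gridH_time x i hat).trans_lt (not_le.1 hold)⟩

def SelectsActive (n k : ℕ) (x : ℕ → ℕ) : Prop :=
  ∀ t, (activeCols n k x t).Nonempty → x (t + 1) ∈ activeCols n k x t

lemma SelectsActive.gridH_le_and_le_sum (hx : SelectsActive n k x) {t : ℕ}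
    (ht : ∀ s < t, (activeCols n k x s).Nonempty) :
    (∀ i, gridH x t i ≤ k) ∧ t ≤ ∑ i ∈ Icc 1 n, gridH x t i := by
  induction t with
  | zero => exact ⟨fun _ => Nat.zero_le _, Nat.zero_le _⟩
  | succ t ih =>
    obtain ⟨hle, hsum⟩ := ih fun s hs => ht s (hs.trans t.lt_succ_self)
    have hsel := hx t (ht t t.lt_succ_self)
    simp only [activeCols, mem_filter] at hsel
    refine ⟨fun i => ?_, ?_⟩
    · simp only [gridH]
      split_ifs
      exacts [max_le (hle i) hsel.2, hle i]
    · have hgrow : ∑ i ∈ Icc 1 n, gridH x t i < ∑ i ∈ Icc 1 n, gridH x (t + 1) i :=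
        sum_lt_sum (fun i _ => gridH_le_gridH_succ x t i)
          ⟨x (t + 1), hsel.1, by simp [gridH]⟩
      omega

/-- Each step of a sequence selecting non-full columns raises the total height, which is at
most `n * k`. -/
lemma SelectsActive.exists_full_le (hx : SelectsActive n k x) :
    ∃ t ≤ n * k, ∀ i ∈ Icc 1 n, gridH x t i = k := by
  have hsum_le (t : ℕ) (hle : ∀ i, gridH x t i ≤ k) : ∑ i ∈ Icc 1 n, gridH x t i ≤ n * k := by
    simpa using sum_le_card_nsmul (Icc 1 n) _ k fun i _ => hle i
  have hexists : ∃ t, activeCols n k x t = ∅ := by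
    by_contra! hne
    obtain ⟨hle, hsum⟩ := hx.gridH_le_and_le_sum (t := n * k + 1) fun s _ => hne s
    have := hsum_le _ hle
    omega
  obtain ⟨hle, hsum⟩ := hx.gridH_le_and_le_sum (t := Nat.find hexists)
    fun s hs => nonempty_iff_ne_empty.2 (Nat.find_min hexists hs)
  refine ⟨Nat.find hexists, hsum.trans (hsum_le _ hle), fun i hi => ?_⟩
  have hfull := filter_eq_empty_iff.1 (Nat.find_spec hexists) hi
  exact le_antisymm (hle i) (not_lt.1 hfull)

lemma SelectsActive.exists_chain (hn : 1 ≤ n) (hx : SelectsActive n k x) {T : ℕ}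
    (hT : gridH x T 1 = k) : ∃ S : Finset ℕ, #S = k ∧ S ⊆ Icc 1 T ∧ AntitoneOn x S ∧
      ∀ a ∈ S, x a ≤ n ∧ gridH x (a - 1) 1 < k := by
  obtain ⟨S, hcard, hsub, hanti, hS⟩ := exists_chain_of_le_gridH x T hT.ge
  refine ⟨S, hcard, hsub, hanti, fun a ha => ⟨?_, (hS a ha).2⟩⟩
  have hactive : 1 ∈ activeCols n k x (a - 1) := by
    simpa [activeCols] using ⟨hn, (hS a ha).2⟩
  have hsel := hx (a - 1) ⟨1, hactive⟩
  rw [Nat.sub_add_cancel (mem_Icc.1 (hsub ha)).1, activeCols_eq_Icc (hS a ha).2] at hsel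
  exact (mem_Icc.1 hsel).2

lemma SelectsActive.fillTime_le_and_gridH_eq {Ω : Type*} {X : ℕ → Ω → ℕ} {ω : Ω}
    (hx : SelectsActive n k (X · ω)) :
    fillTime n k X ω ≤ n * k ∧ ∀ i ∈ Icc 1 n, gridH (X · ω) (fillTime n k X ω) i = k := by
  obtain ⟨t, ht, hfull⟩ := hx.exists_full_le
  have hmem : t ∈ {t | ∀ i ∈ Icc 1 n, gridH (X · ω) t i = k} := hfull
  exact ⟨(Nat.sInf_le hmem).trans ht, Nat.sInf_mem ⟨t, hmem⟩⟩

def levelCounts (n : ℕ) (S : Finset ℕ) (x : ℕ → ℕ) (j : Fin n) : ℕ := #{b ∈ S | j < x b}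

/-- The upper level sets of a function antitone on `S` are initial segments of `S`, so its value
at `a ∈ S` is the number of them longer than the part of `S` below `a`. -/
def decodeLevels (S : Finset ℕ) (c : Fin n → ℕ) (a : ℕ) : ℕ := #{j | #{b ∈ S | b < a} < c j}

lemma AntitoneOn.card_filter_lt_lt_iff {S : Finset ℕ} (hx : AntitoneOn x S) {a : ℕ} (ha : a ∈ S)
    (j : ℕ) : #{b ∈ S | b < a} < #{b ∈ S | j < x b} ↔ j < x a := by
  constructor
  · intro hlt
    by_contra! hxa
    refine hlt.not_ge (card_le_card fun b hb => ?_)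
    simp only [mem_filter] at hb ⊢
    refine ⟨hb.1, not_le.1 fun hab => ?_⟩
    exact (hx ha hb.1 hab).trans hxa |>.not_gt hb.2
  · intro hxa
    calc #{b ∈ S | b < a} < #{b ∈ S | b ≤ a} := by
          refine card_lt_card ⟨fun b hb => ?_, fun h => ?_⟩
          · simp only [mem_filter] at hb ⊢; exact ⟨hb.1, hb.2.le⟩
          · simpa using h (mem_filter.2 ⟨ha, le_rfl⟩)
      _ ≤ #{b ∈ S | j < x b} := by
          refine card_le_card fun b hb => ?_
          simp only [mem_filter] at hb ⊢
          exact ⟨hb.1, hxa.trans_le (hx hb.1 ha hb.2)⟩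

lemma decodeLevels_levelCounts {S : Finset ℕ} (hx : AntitoneOn x S) {a : ℕ} (ha : a ∈ S)
    (hxa : x a ≤ n) : decodeLevels S (levelCounts n S x) a = x a := by
  simp only [decodeLevels, levelCounts, hx.card_filter_lt_lt_iff ha]
  rw [Fin.card_filter_val_lt, min_eq_right hxa]

end Deterministic

section Cylinders

lemma measure_preimage_inter_le_of_fibers {Ω β : Type*} [MeasurableSpace Ω] {μ : Measure Ω}
    [MeasurableSpace β] [Countable β] [MeasurableSingletonClass β] {Φ : Ω → β}
    (hΦ : Measurable Φ) (D : Set β) (E : Set Ω) {c : ℝ≥0∞}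
    (h : ∀ y ∈ D, μ (Φ ⁻¹' {y} ∩ E) ≤ c * μ (Φ ⁻¹' {y})) :
    μ (Φ ⁻¹' D ∩ E) ≤ c * μ (Φ ⁻¹' D) := by
  calc μ (Φ ⁻¹' D ∩ E) = μ (⋃ y ∈ D, Φ ⁻¹' {y} ∩ E) := by
        rw [← Set.iUnion₂_inter, Set.biUnion_preimage_singleton]
    _ ≤ ∑' y : D, μ (Φ ⁻¹' {(y : β)} ∩ E) := measure_biUnion_le μ D.to_countable _
    _ ≤ ∑' y : D, c * μ (Φ ⁻¹' {(y : β)}) := ENNReal.tsum_le_tsum fun y => h y y.2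
    _ = c * μ (Φ ⁻¹' D) := by
        rw [ENNReal.tsum_mul_left, tsum_measure_preimage_singleton D.to_countable
          fun y _ => hΦ (measurableSet_singleton y)]

variable {Ω : Type*} {X : ℕ → Ω → ℕ} {t : ℕ}

def history (X : ℕ → Ω → ℕ) (t : ℕ) (ω : Ω) : Fin t → ℕ := fun s => X (s + 1) ω

def pathCylinder (X : ℕ → Ω → ℕ) (t : ℕ) (x : ℕ → ℕ) : Set Ω :=
  {ω | ∀ s, 1 ≤ s → s ≤ t → X s ω = x s}

lemma pathCylinder_eq_preimage (x : ℕ → ℕ) :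
    pathCylinder X t x = history X t ⁻¹' {fun s : Fin t => x (s + 1)} := by
  ext ω
  simp only [pathCylinder, history, Set.mem_preimage, Set.mem_singleton_iff, funext_iff,
    Fin.forall_iff]
  constructor
  · exact fun h s hs => h (s + 1) (Nat.le_add_left 1 s) hs
  · intro h s h1 h2
    simpa [Nat.sub_add_cancel h1] using h (s - 1) (by omega)

lemma measurable_history [MeasurableSpace Ω] (hX : ∀ s, Measurable (X s)) :
    Measurable (history X t) :=
  measurable_pi_lambda _ fun s => hX (s + 1)

lemma measurableSet_pathCylinder [MeasurableSpace Ω] (hX : ∀ s, Measurable (X s)) (x : ℕ → ℕ) :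
    MeasurableSet (pathCylinder X t x) := by
  rw [pathCylinder_eq_preimage]
  exact measurable_history hX (measurableSet_singleton _)

/-- The cylinders are the fibres of the countably-valued `history X t`. -/
lemma measure_inter_le_of_pathCylinder [MeasurableSpace Ω] {μ : Measure Ω}
    (hX : ∀ s, Measurable (X s)) {S E : Set Ω} {c : ℝ≥0∞}
    (hS : ∀ ω ∈ S, pathCylinder X t (X · ω) ⊆ S)
    (h : ∀ ω ∈ S, μ (pathCylinder X t (X · ω) ∩ E) ≤ c * μ (pathCylinder X t (X · ω))) :
    μ (S ∩ E) ≤ c * μ S := by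
  have hfiber (ω : Ω) : history X t ⁻¹' {history X t ω} = pathCylinder X t (X · ω) :=
    (pathCylinder_eq_preimage (X · ω)).symm
  have hsat : S = history X t ⁻¹' (history X t '' S) := by
    refine (Set.subset_preimage_image _ _).antisymm fun ω ⟨ω', hω', heq⟩ => hS ω' hω' ?_
    rw [← hfiber]
    exact heq.symm
  rw [hsat]
  refine measure_preimage_inter_le_of_fibers (measurable_history hX) _ E ?_
  rintro _ ⟨ω, hω, rfl⟩
  rw [hfiber]
  exact h ω hω

end Cylinders

open Nat Real in
lemma choose_mul_inv_pow_le_exp_div_pow {M n k : ℕ} (hn : 1 ≤ n) (hM : 8 * M ≤ n * k) :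
    (M.choose k : ℝ) * (n : ℝ)⁻¹ ^ k ≤ (exp 1 / 8) ^ k := by
  have hn' : (0 : ℝ) < n := by exact_mod_cast hn
  have hMn : (M : ℝ) / n ≤ k / 8 := by
    rw [div_le_div_iff₀ hn' (by norm_num)]
    exact_mod_cast (by linarith : M * 8 ≤ k * n)
  calc (M.choose k : ℝ) * (n : ℝ)⁻¹ ^ k ≤ (M : ℝ) ^ k / k ! * (n : ℝ)⁻¹ ^ k := by
        gcongr
        exact Nat.choose_le_pow_div k M
    _ = ((M : ℝ) / n) ^ k / k ! := by ring
    _ ≤ ((k : ℝ) / 8) ^ k / k ! := by gcongr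
    _ = (k : ℝ) ^ k / k ! / 8 ^ k := by rw [div_pow]; ring
    _ ≤ exp k / 8 ^ k := by gcongr; exact pow_div_factorial_le_exp _ k.cast_nonneg k
    _ = (exp 1 / 8) ^ k := by rw [div_pow, exp_one_pow]

lemma tendsto_add_one_pow_mul_pow_atTop {r : ℝ} (hr₀ : 0 < r) (hr₁ : r < 1) (n : ℕ) :
    Tendsto (fun k : ℕ => ((k : ℝ) + 1) ^ n * r ^ k) atTop (nhds 0) := by
  have h := ((tendsto_pow_const_mul_const_pow_of_abs_lt_one n (abs_lt.2 ⟨by linarith, hr₁⟩)).comp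
    (tendsto_add_atTop_nat 1)).const_mul r⁻¹
  rw [mul_zero] at h
  refine h.congr fun k => ?_
  simp only [Function.comp_apply, Nat.cast_add, Nat.cast_one, pow_succ]
  field_simp

section GridProcess

variable {Ω : Type*} [MeasureSpace Ω] [IsProbabilityMeasure (ℙ : Measure Ω)]
  {n k : ℕ} {X : ℕ → Ω → ℕ}

lemma IsGridProcess.measure_pathCylinder_inter_eq (hX : IsGridProcess n k X) {t : ℕ}
    {x : ℕ → ℕ} (hne : (activeCols n k x t).Nonempty) (j : ℕ) :
    ℙ (pathCylinder X t x ∩ {ω | X (t + 1) ω = j}) =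
      (if j ∈ activeCols n k x t then (#(activeCols n k x t) : ℝ≥0∞)⁻¹ else 0) *
        ℙ (pathCylinder X t x) := by
  by_cases h0 : ℙ (pathCylinder X t x) = 0
  · rw [h0, mul_zero]
    exact measure_mono_null Set.inter_subset_left h0
  · rw [← hX.2 t x h0 hne j, ← cond_mul_eq_inter (measurableSet_pathCylinder hX.1 x)]
    rfl

lemma IsGridProcess.selectsActive_ae (hX : IsGridProcess n k X) :
    ∀ᵐ ω, SelectsActive n k (X · ω) := by
  refine ae_all_iff.2 fun t => ae_iff.2 ?_
  have hnull := measure_inter_le_of_pathCylinder (μ := ℙ) (t := t) (c := 0) hX.1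
    (S := {ω | (activeCols n k (X · ω) t).Nonempty})
    (E := {ω | X (t + 1) ω ∉ activeCols n k (X · ω) t})
    (fun ω hω ω' hω' => by
      change (activeCols n k _ t).Nonempty
      rwa [activeCols_congr hω'])
    (fun ω hω => ?_)
  · rw [zero_mul, nonpos_iff_eq_zero] at hnull
    exact measure_mono_null (fun ω hω => Classical.not_imp.1 hω) hnull
  · rw [zero_mul, nonpos_iff_eq_zero]
    refine measure_mono_null (t := ⋃ j ∈ (activeCols n k (X · ω) t : Set ℕ)ᶜ,
      pathCylinder X t (X · ω) ∩ {ω' | X (t + 1) ω' = j}) ?_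
      ((measure_biUnion_null_iff (Set.to_countable _)).2 fun j hj => ?_)
    · rintro ω' ⟨hcyl, hsel⟩
      change X (t + 1) ω' ∉ _ at hsel
      rw [activeCols_congr hcyl] at hsel
      exact Set.mem_biUnion hsel ⟨hcyl, rfl⟩
    · rw [hX.measure_pathCylinder_inter_eq hω, if_neg (by simpa using hj), zero_mul]

lemma IsGridProcess.measure_inter_next_eq_le (hn : 1 ≤ n) (hX : IsGridProcess n k X) {t : ℕ}
    {S : Set Ω} (hS : ∀ ω ∈ S, pathCylinder X t (X · ω) ⊆ S)
    (hbelow : ∀ ω ∈ S, gridH (X · ω) t 1 < k) (j : ℕ) :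
    ℙ (S ∩ {ω | X (t + 1) ω = j}) ≤ (n : ℝ≥0∞)⁻¹ * ℙ S := by
  refine measure_inter_le_of_pathCylinder hX.1 hS fun ω hω => ?_
  have hactive := activeCols_eq_Icc (n := n) (hbelow ω hω)
  rw [hX.measure_pathCylinder_inter_eq (hactive ▸ nonempty_Icc.2 hn), hactive, Nat.card_Icc,
    Nat.add_sub_cancel]
  gcongr
  split_ifs
  exacts [le_rfl, zero_le]

/-- While column `1` is not full every column is active, so each prescribed selection costs a
factor `1 / n`. -/
lemma IsGridProcess.measure_chain_le (hn : 1 ≤ n) (hX : IsGridProcess n k X) (v : ℕ → ℕ)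
    (S : Finset ℕ) (hS : ∀ a ∈ S, 1 ≤ a) :
    ℙ {ω | ∀ a ∈ S, X a ω = v a ∧ gridH (X · ω) (a - 1) 1 < k} ≤ (n : ℝ≥0∞)⁻¹ ^ #S := by
  induction S using Finset.induction_on_max with
  | empty => simp
  | insert a S hlt ih =>
    have hsucc : a - 1 + 1 = a := Nat.sub_add_cancel (hS a (mem_insert_self a S))
    have hle : ∀ b ∈ S, b ≤ a - 1 := fun b hb => Nat.le_sub_one_of_lt (hlt b hb)
    set P := {ω | ∀ b ∈ S, X b ω = v b ∧ gridH (X · ω) (b - 1) 1 < k} ∩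
      {ω | gridH (X · ω) (a - 1) 1 < k}
    have hsat : ∀ ω ∈ P, pathCylinder X (a - 1) (X · ω) ⊆ P := by
      intro ω hω ω' hω'
      have hagree {t : ℕ} (ht : t ≤ a - 1) : gridH (X · ω') t = gridH (X · ω) t :=
        gridH_congr fun s h1 h2 => hω' s h1 (h2.trans ht)
      refine ⟨fun b hb => ?_, ?_⟩
      · rw [hω' b (hS b (mem_insert_of_mem hb)) (hle b hb),
          hagree ((b.sub_le 1).trans (hle b hb))]
        exact hω.1 b hb
      · change gridH _ _ 1 < k
        rw [hagree le_rfl]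
        exact hω.2
    calc ℙ {ω | ∀ b ∈ insert a S, X b ω = v b ∧ gridH (X · ω) (b - 1) 1 < k}
        ≤ ℙ (P ∩ {ω | X (a - 1 + 1) ω = v a}) := by
          refine measure_mono fun ω hω => ⟨⟨fun b hb => hω b (mem_insert_of_mem hb),
            (hω a (mem_insert_self a S)).2⟩, ?_⟩
          change X _ ω = v a
          rw [hsucc]
          exact (hω a (mem_insert_self a S)).1
      _ ≤ (n : ℝ≥0∞)⁻¹ * ℙ P := hX.measure_inter_next_eq_le hn hsat (fun ω hω => hω.2) (v a)
      _ ≤ (n : ℝ≥0∞)⁻¹ * (n : ℝ≥0∞)⁻¹ ^ #S := by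
          gcongr
          exact (measure_mono Set.inter_subset_left).trans
            (ih fun b hb => hS b (mem_insert_of_mem hb))
      _ = (n : ℝ≥0∞)⁻¹ ^ #(insert a S) := by
          rw [card_insert_of_notMem fun h => (hlt a h).false, pow_succ']

/-- Union bound over the chains forced by an early fill time, each chain being encoded by its
set of times and the `levelCounts` of its selections. -/
lemma IsGridProcess.measure_fillTime_le_le (hn : 1 ≤ n) (hX : IsGridProcess n k X) (M : ℕ) :
    ℙ {ω | SelectsActive n k (X · ω) ∧ fillTime n k X ω ≤ M} ≤
      (M.choose k * (k + 1) ^ n : ℕ) * (n : ℝ≥0∞)⁻¹ ^ k := by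
  set I := (Icc 1 M).powersetCard k ×ˢ Fintype.piFinset fun _ : Fin n => range (k + 1)
  set B : Finset ℕ × (Fin n → ℕ) → Set Ω := fun p =>
    {ω | ∀ a ∈ p.1, X a ω = decodeLevels p.1 p.2 a ∧ gridH (X · ω) (a - 1) 1 < k}
  have hcover : {ω | SelectsActive n k (X · ω) ∧ fillTime n k X ω ≤ M} ⊆ ⋃ p ∈ I, B p := by
    rintro ω ⟨hx, hT⟩
    obtain ⟨S, hcard, hsub, hanti, hS⟩ :=
      hx.exists_chain hn (hx.fillTime_le_and_gridH_eq.2 1 (left_mem_Icc.2 hn))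
    refine Set.mem_biUnion (x := (S, levelCounts n S (X · ω))) ?_ fun a ha => ?_
    · refine mem_product.2 ⟨mem_powersetCard.2 ⟨hsub.trans (Icc_subset_Icc_right hT), hcard⟩,
        Fintype.mem_piFinset.2 fun j => mem_range.2 (Nat.lt_succ_of_le ?_)⟩
      exact hcard ▸ card_filter_le _ _
    · exact ⟨(decodeLevels_levelCounts hanti ha (hS a ha).1).symm, (hS a ha).2⟩
  calc ℙ {ω | SelectsActive n k (X · ω) ∧ fillTime n k X ω ≤ M}
      ≤ ∑ p ∈ I, ℙ (B p) := (measure_mono hcover).trans (measure_biUnion_finset_le I B)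
    _ ≤ ∑ _p ∈ I, (n : ℝ≥0∞)⁻¹ ^ k := by
        refine sum_le_sum fun p hp => ?_
        obtain ⟨hS, -⟩ := mem_product.1 hp
        obtain ⟨hsub, hcard⟩ := mem_powersetCard.1 hS
        rw [← hcard]
        exact hX.measure_chain_le hn _ p.1 fun a ha => (mem_Icc.1 (hsub ha)).1
    _ = (M.choose k * (k + 1) ^ n : ℕ) * (n : ℝ≥0∞)⁻¹ ^ k := by
        simp [I, card_powersetCard]

/-- Almost surely `T ≤ k n`, so `T` can only leave `[k n / 8, k n]` by being at most
`⌊n k / 8⌋`. -/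
lemma IsGridProcess.measure_fillTime_notMem_le (hn : 1 ≤ n) (hX : IsGridProcess n k X) :
    (ℙ {ω | (k * n : ℝ) / 8 ≤ fillTime n k X ω ∧ (fillTime n k X ω : ℝ) ≤ k * n}ᶜ).toReal ≤
      ((k : ℝ) + 1) ^ n * (Real.exp 1 / 8) ^ k := by
  have hae : {ω | (k * n : ℝ) / 8 ≤ fillTime n k X ω ∧ (fillTime n k X ω : ℝ) ≤ k * n}ᶜ ≤ᵐ[ℙ]
      {ω | SelectsActive n k (X · ω) ∧ fillTime n k X ω ≤ n * k / 8} := by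
    filter_upwards [hX.selectsActive_ae] with ω hx hω
    have hupper : (fillTime n k X ω : ℝ) ≤ k * n := by
      rw [mul_comm]; exact_mod_cast hx.fillTime_le_and_gridH_eq.1
    have hlower : (fillTime n k X ω * 8 : ℝ) < n * k := by
      linarith [not_le.1 fun h => hω ⟨h, hupper⟩]
    refine ⟨hx, (Nat.le_div_iff_mul_le (by norm_num)).2 (by exact_mod_cast hlower.le)⟩
  calc _ ≤ (((n * k / 8).choose k * (k + 1) ^ n : ℕ) * (n : ℝ≥0∞)⁻¹ ^ k).toReal :=
        ENNReal.toReal_mono (ENNReal.mul_ne_top (ENNReal.natCast_ne_top _)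
          (ENNReal.pow_ne_top (ENNReal.inv_ne_top.2 (Nat.cast_ne_zero.2 (by omega)))))
          ((measure_mono_ae hae).trans (hX.measure_fillTime_le_le hn _))
    _ = ((k : ℝ) + 1) ^ n * (((n * k / 8).choose k : ℝ) * (n : ℝ)⁻¹ ^ k) := by
        simp only [ENNReal.toReal_mul, ENNReal.toReal_pow, ENNReal.toReal_inv,
          ENNReal.toReal_natCast]
        push_cast
        ring
    _ ≤ ((k : ℝ) + 1) ^ n * (Real.exp 1 / 8) ^ k := by
        gcongr
        exact choose_mul_inv_pow_le_exp_div_pow hn (Nat.mul_div_le _ _)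

lemma IsGridProcess.one_sub_le_measure_fillTime_mem (hn : 1 ≤ n) (hX : IsGridProcess n k X) :
    1 - ((k : ℝ) + 1) ^ n * (Real.exp 1 / 8) ^ k ≤
      (ℙ {ω | (k * n : ℝ) / 8 ≤ fillTime n k X ω ∧ (fillTime n k X ω : ℝ) ≤ k * n}).toReal := by
  set E := {ω | (k * n : ℝ) / 8 ≤ fillTime n k X ω ∧ (fillTime n k X ω : ℝ) ≤ k * n}
  have hsplit : 1 ≤ (ℙ E).toReal + (ℙ Eᶜ).toReal := by
    rw [← ENNReal.toReal_add (measure_ne_top _ _) (measure_ne_top _ _)]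
    simpa using ENNReal.toReal_mono (by finiteness) (measure_univ_le_add_compl E (μ := ℙ))
  linarith [hX.measure_fillTime_notMem_le hn]

end GridProcess

/-- There are universal constants `0 < c_L < c_U` such that for every fixed
integer `n ≥ 1`, `P( c_L·k·n ≤ T(n,k) ≤ c_U·k·n ) → 1` as `k → ∞`. -/
theorem cd_fill_time_fixed_n :
    ∃ cL cU : ℝ, 0 < cL ∧ cL < cU ∧
      ∀ n : ℕ, 1 ≤ n →
      ∀ (Ω : Type) (_ : MeasureSpace Ω) (_ : IsProbabilityMeasure (ℙ : Measure Ω))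
        (X : ℕ → ℕ → Ω → ℕ), (∀ k, IsGridProcess n k (X k)) →
        Tendsto
          (fun (k : ℕ) => (ℙ {ω |
              cL * (k : ℝ) * (n : ℝ) ≤ (fillTime n k (X k) ω : ℝ) ∧
              (fillTime n k (X k) ω : ℝ) ≤ cU * (k : ℝ) * (n : ℝ)}).toReal)
          atTop (nhds 1) := by
  refine ⟨1 / 8, 1, by norm_num, by norm_num, fun n hn Ω _ _ X hX => ?_⟩
  have hr : Real.exp 1 / 8 < 1 := by linarith [Real.exp_one_lt_d9]
  have hlower := (tendsto_add_one_pow_mul_pow_atTop (by positivity) hr n).const_sub 1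
  rw [sub_zero] at hlower
  refine tendsto_of_tendsto_of_tendsto_of_le_of_le hlower tendsto_const_nhds
    (fun k => ((hX k).one_sub_le_measure_fillTime_mem hn).trans_eq ?_) fun k => measureReal_le_one
  simp only [one_mul, one_div, inv_mul_eq_div, div_mul_eq_mul_div]
end

section
/- Let X = X_1 + ... + X_k be a sum of k i.i.d. geometric random variables with success probability p ∈ (0,1] (each X_i supported on {1,2,3,...} with P(X_i = m) = (1−p)^{m−1} p), so that E[X] = k/p. Then, with H(x) = x·ln x − x + 1: (1) for every real t ≥ E[X], P( X ≥ t ) ≤ exp( − (k·t / E[X]) · H( E[X] / t ) ); and (2) for every real t with 0 < t ≤ E[X], P( X ≤ t ) ≤ exp( − (k·t / E[X]) · H( E[X] / t ) ). -/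
open MeasureTheory ProbabilityTheory Filter

/-- The Cramér-type rate function `H(x) = x·ln x − x + 1`. -/
noncomputable def Hrate (x : ℝ) : ℝ := x * Real.log x - x + 1

/-! Chernoff's method with an explicit, slightly suboptimal exponent. Each `Xᵢ` has the law of
`1 + G` with `G ~ geometricMeasure p`, so `E[e^{θXᵢ}] = p eᶿ / (1 - (1 - p) eᶿ)` whenever
`(1 - p) eᶿ < 1`. For `u = E[X] / t` the exponent `θ = -log (1 + p (u - 1))` makes this equal to
`u⁻¹`, hence `E[e^{θX}] = u^{-k}` by independence, and `θ ≥ 0` exactly when `t ≥ E[X]`. Markov's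
inequality bounds the relevant tail by `e^{-θt} u^{-k}`, and `log (1 + p (u - 1)) ≤ p (u - 1)`
turns this into `exp (-p t H(u))`. -/

open Real

/-- The law of the number of Bernoulli(`p`) trials up to and including the first success;
`geometricMeasure p` counts only the failures. -/
noncomputable def geometricTrialsMeasure (p : unitInterval) : Measure ℕ :=
  (geometricMeasure p).map (· + 1)

section GeometricTrials

variable {p : unitInterval} {θ : ℝ}

lemma hasSum_geometric_mul_exp_mul_succ (hθ : (1 - p) * exp θ < 1) :
    HasSum (fun n : ℕ ↦ (1 - p : ℝ) ^ n * p * exp (θ * (n + 1 : ℕ)))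
      (p * exp θ / (1 - (1 - p) * exp θ)) := by
  have hq : 0 ≤ (1 - p : ℝ) * exp θ := mul_nonneg (by linarith [p.2.2]) (exp_pos θ).le
  have hterm : (fun n : ℕ ↦ (1 - p : ℝ) ^ n * p * exp (θ * (n + 1 : ℕ))) =
      fun n ↦ p * exp θ * ((1 - p) * exp θ) ^ n := by
    ext n
    rw [Nat.cast_succ, mul_add_one, exp_add, mul_comm θ, exp_nat_mul, mul_pow]
    ring
  rw [hterm, div_eq_mul_inv]
  exact (hasSum_geometric_of_lt_one hq hθ).mul_left _

lemma integrable_exp_mul_geometricTrialsMeasure (hp : p ≠ 0) (hθ : (1 - p) * exp θ < 1) :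
    Integrable (fun n : ℕ ↦ exp (θ * n)) (geometricTrialsMeasure p) := by
  rw [geometricTrialsMeasure, integrable_map_measure measurable_from_top.aestronglyMeasurable
    measurable_from_top.aemeasurable, integrable_geometricMeasure_iff hp]
  simpa only [Function.comp_apply, norm_eq_abs, abs_exp] using
    (hasSum_geometric_mul_exp_mul_succ hθ).summable

lemma mgf_geometricTrialsMeasure (hp : p ≠ 0) (hθ : (1 - p) * exp θ < 1) :
    mgf (fun n : ℕ ↦ (n : ℝ)) (geometricTrialsMeasure p) θ =
      p * exp θ / (1 - (1 - p) * exp θ) := by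
  rw [geometricTrialsMeasure, mgf_map measurable_from_top.aemeasurable
    measurable_from_top.aestronglyMeasurable, mgf, integral_geometricMeasure hp]
  exact (hasSum_geometric_mul_exp_mul_succ hθ).tsum_eq

variable {Ω : Type*} [MeasurableSpace Ω] {μ : Measure Ω}

lemma map_eq_geometricTrialsMeasure [IsFiniteMeasure μ] (hp : p ≠ 0) {X : Ω → ℕ}
    (hX : Measurable X) (hgeo : ∀ m, 1 ≤ m → μ.real {ω | X ω = m} = (1 - p) ^ (m - 1) * p)
    (hzero : μ {ω | X ω = 0} = 0) :
    μ.map X = geometricTrialsMeasure p := by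
  refine Measure.ext_of_singleton fun n ↦ ?_
  rw [geometricTrialsMeasure, Measure.map_apply hX (measurableSet_singleton n),
    Measure.map_apply measurable_from_top (measurableSet_singleton n)]
  cases n with
  | zero =>
    have hpre : (· + 1) ⁻¹' {0} = (∅ : Set ℕ) := by ext; simp
    rw [hpre, measure_empty]
    exact hzero
  | succ m =>
    have hpre : (· + 1) ⁻¹' {m + 1} = ({m} : Set ℕ) := by ext; simp
    have hm := hgeo (m + 1) (by omega)
    rw [Nat.add_sub_cancel] at hm
    rw [hpre, geometricMeasure_singleton hp, ← hm, measureReal_def,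
      ENNReal.ofReal_toReal (measure_ne_top _ _)]
    rfl

lemma integrable_and_mgf_sum_of_map_eq_geometricTrialsMeasure {ι : Type*} [Fintype ι]
    {X : ι → Ω → ℕ} (hp : p ≠ 0) (hθ : (1 - p) * exp θ < 1) (hX : ∀ i, Measurable (X i))
    (hindep : iIndepFun X μ) (hlaw : ∀ i, μ.map (X i) = geometricTrialsMeasure p) :
    Integrable (fun ω ↦ exp (θ * ((∑ i, X i ω : ℕ) : ℝ))) μ ∧
      mgf (fun ω ↦ ((∑ i, X i ω : ℕ) : ℝ)) μ θ =
        (p * exp θ / (1 - (1 - p) * exp θ)) ^ Fintype.card ι := by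
  have := hindep.isProbabilityMeasure
  set Y : ι → Ω → ℝ := fun i ω ↦ X i ω
  have hY i : Measurable (Y i) := measurable_from_top.comp (hX i)
  have hYindep : iIndepFun Y μ := hindep.comp _ fun _ ↦ measurable_from_top
  have hexp : AEStronglyMeasurable (fun n : ℕ ↦ exp (θ * n)) (geometricTrialsMeasure p) :=
    measurable_from_top.aestronglyMeasurable
  have hint i : Integrable (fun ω ↦ exp (θ * Y i ω)) μ := by
    have h := integrable_exp_mul_geometricTrialsMeasure hp hθ
    rwa [← hlaw i, integrable_map_measure (hlaw i ▸ hexp) (hX i).aemeasurable] at h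
  have hmgf i : mgf (Y i) μ θ = p * exp θ / (1 - (1 - p) * exp θ) := by
    rw [← mgf_geometricTrialsMeasure hp hθ, ← hlaw i,
      mgf_map (hX i).aemeasurable (hlaw i ▸ hexp)]
    rfl
  have hsum ω : ((∑ i, X i ω : ℕ) : ℝ) = (∑ i, Y i) ω := by simp [Y]
  simp_rw [hsum]
  refine ⟨hYindep.integrable_exp_mul_sum hY fun i _ ↦ hint i, ?_⟩
  rw [hYindep.mgf_sum hY, Finset.prod_congr rfl fun i _ ↦ hmgf i, Finset.prod_const,
    Finset.card_univ]

end GeometricTrials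

noncomputable def geometricTilt (p u : ℝ) : ℝ := -log (1 + p * (u - 1))

section GeometricTilt

variable {p u : ℝ}

lemma one_add_mul_sub_one_pos (hp0 : 0 < p) (hp1 : p ≤ 1) (hu : 0 < u) :
    0 < 1 + p * (u - 1) := by
  nlinarith [mul_pos hp0 hu]

lemma exp_geometricTilt (hp0 : 0 < p) (hp1 : p ≤ 1) (hu : 0 < u) :
    exp (geometricTilt p u) = (1 + p * (u - 1))⁻¹ := by
  rw [geometricTilt, exp_neg, exp_log (one_add_mul_sub_one_pos hp0 hp1 hu)]

lemma one_sub_mul_exp_geometricTilt_lt_one (hp0 : 0 < p) (hp1 : p ≤ 1) (hu : 0 < u) :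
    (1 - p) * exp (geometricTilt p u) < 1 := by
  have hc := one_add_mul_sub_one_pos hp0 hp1 hu
  rw [exp_geometricTilt hp0 hp1 hu, ← div_eq_mul_inv, div_lt_one hc]
  nlinarith

lemma geometric_mgf_geometricTilt (hp0 : 0 < p) (hp1 : p ≤ 1) (hu : 0 < u) :
    p * exp (geometricTilt p u) / (1 - (1 - p) * exp (geometricTilt p u)) = u⁻¹ := by
  have hc := one_add_mul_sub_one_pos hp0 hp1 hu
  rw [exp_geometricTilt hp0 hp1 hu]
  have hden : 1 - (1 - p) * (1 + p * (u - 1))⁻¹ = p * u / (1 + p * (u - 1)) := by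
    field_simp
    ring
  rw [hden, ← div_eq_mul_inv, div_div_div_cancel_right₀ hc.ne', ← div_div, div_self hp0.ne',
    one_div]

lemma geometricTilt_nonneg (hp0 : 0 < p) (hp1 : p ≤ 1) (hu : 0 < u) (hu1 : u ≤ 1) :
    0 ≤ geometricTilt p u := by
  rw [geometricTilt, neg_nonneg]
  exact log_nonpos (one_add_mul_sub_one_pos hp0 hp1 hu).le (by nlinarith)

lemma geometricTilt_nonpos (hp0 : 0 ≤ p) (hu1 : 1 ≤ u) : geometricTilt p u ≤ 0 := by
  rw [geometricTilt, neg_nonpos]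
  exact log_nonneg (by nlinarith)

lemma exp_neg_geometricTilt_mul_mul_inv_pow_le {t : ℝ} {k : ℕ} (hp0 : 0 < p) (hp1 : p ≤ 1)
    (ht : 0 < t) (hu : 0 < u) (hk : (k : ℝ) = p * t * u) :
    exp (-geometricTilt p u * t) * u⁻¹ ^ k ≤ exp (-(p * t) * Hrate u) := by
  have htilt : -geometricTilt p u ≤ p * (u - 1) := by
    rw [geometricTilt, neg_neg]
    linarith [log_le_sub_one_of_pos (one_add_mul_sub_one_pos hp0 hp1 hu)]
  have hpow : u⁻¹ ^ k = exp (-(k * log u)) := by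
    rw [exp_neg, exp_nat_mul, exp_log hu, inv_pow]
  calc exp (-geometricTilt p u * t) * u⁻¹ ^ k
      = exp (-geometricTilt p u * t - k * log u) := by rw [hpow, ← exp_add, sub_eq_add_neg]
    _ ≤ exp (p * (u - 1) * t - k * log u) := by
      gcongr
    _ = exp (-(p * t) * Hrate u) := by
      rw [hk, Hrate]
      ring_nf

end GeometricTilt

/-- Let `X = X₁ + ⋯ + X_k` be a sum of `k` i.i.d. geometric random
variables with success probability `p ∈ (0,1]` (supported on `{1,2,…}` with
`P(Xᵢ = m) = (1−p)^{m−1}·p`), so that `E[X] = k/p`. Then: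
(1) for every `t ≥ E[X]`, `P(X ≥ t) ≤ exp(−(k·t/E[X])·H(E[X]/t))`; and
(2) for every `0 < t ≤ E[X]`, `P(X ≤ t) ≤ exp(−(k·t/E[X])·H(E[X]/t))`. -/
theorem chernoff_sum_geometrics
    (Ω : Type*) [MeasureSpace Ω] [IsProbabilityMeasure (ℙ : Measure Ω)]
    (k : ℕ) (hk : 1 ≤ k) (p : ℝ) (hp0 : 0 < p) (hp1 : p ≤ 1)
    (X : Fin k → Ω → ℕ) (hmeas : ∀ i, Measurable (X i))
    (hindep : iIndepFun X ℙ)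
    (hgeo : ∀ i m, 1 ≤ m →
      (ℙ {ω | X i ω = m}).toReal = (1 - p) ^ (m - 1) * p)
    (hzero : ∀ i, ℙ {ω | X i ω = 0} = 0) :
    (∀ t : ℝ, (k : ℝ) / p ≤ t →
      (ℙ {ω | t ≤ ((∑ i, X i ω : ℕ) : ℝ)}).toReal ≤
        Real.exp (-((k : ℝ) * t / ((k : ℝ) / p)) * Hrate (((k : ℝ) / p) / t))) ∧
    (∀ t : ℝ, 0 < t → t ≤ (k : ℝ) / p →
      (ℙ {ω | ((∑ i, X i ω : ℕ) : ℝ) ≤ t}).toReal ≤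
        Real.exp (-((k : ℝ) * t / ((k : ℝ) / p)) * Hrate (((k : ℝ) / p) / t))) := by
  have hk0 : (0 : ℝ) < k := by exact_mod_cast hk
  let q : unitInterval := ⟨p, hp0.le, hp1⟩
  have hq : q ≠ 0 := fun h ↦ hp0.ne' (congrArg Subtype.val h)
  have hlaw i : (ℙ : Measure Ω).map (X i) = geometricTrialsMeasure q :=
    map_eq_geometricTrialsMeasure hq (hmeas i) (hgeo i) (hzero i)
  have chernoff (t : ℝ) (ht : 0 < t) :
      Integrable (fun ω ↦ exp (geometricTilt p (k / p / t) * ((∑ i, X i ω : ℕ) : ℝ))) ℙ ∧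
      exp (-geometricTilt p (k / p / t) * t) *
          mgf (fun ω ↦ ((∑ i, X i ω : ℕ) : ℝ)) ℙ (geometricTilt p (k / p / t)) ≤
        exp (-(k * t / (k / p)) * Hrate (k / p / t)) := by
    have hu : 0 < (k : ℝ) / p / t := by positivity
    obtain ⟨hint, hmgf⟩ := integrable_and_mgf_sum_of_map_eq_geometricTrialsMeasure hq
      (one_sub_mul_exp_geometricTilt_lt_one hp0 hp1 hu) hmeas hindep hlaw
    refine ⟨hint, ?_⟩
    rw [hmgf, geometric_mgf_geometricTilt hp0 hp1 hu, Fintype.card_fin,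
      show (k : ℝ) * t / (k / p) = p * t by field_simp]
    exact exp_neg_geometricTilt_mul_mul_inv_pow_le hp0 hp1 ht hu (by field_simp)
  refine ⟨fun t ht ↦ ?_, fun t ht htle ↦ ?_⟩
  · have ht0 : 0 < t := (div_pos hk0 hp0).trans_le ht
    have htilt := geometricTilt_nonneg hp0 hp1 (by positivity) ((div_le_one ht0).2 ht)
    exact (measure_ge_le_exp_mul_mgf t htilt (chernoff t ht0).1).trans (chernoff t ht0).2
  · have htilt := geometricTilt_nonpos hp0.le ((one_le_div ht).2 htle)
    exact (measure_le_le_exp_mul_mgf t htilt (chernoff t ht).1).trans (chernoff t ht).2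
end

section
/- Let k ≥ 1 be an integer, r > 0 a real number, and R_1 ≤ R_2 ≤ ... ≤ R_k real numbers. Then Σ_{i=1}^{k−1} (R_{i+1} − R_i)^2 / ( 2(r + R_k − R_1) ) + r^2 / ( 2(r + R_k − R_1) ) ≥ r / (√k + 1). -/
/-!
By Cauchy–Schwarz the `k - 1` gaps, which sum to `D = R k - R 1`, satisfy
`D² ≤ (k - 1) S` with `S` the sum of their squares. Writing `s = √k`, the claim amounts to
`2 r D ≤ (s + 1) S + (s - 1) r²`, and the product of the two summands on the right is
`(s² - 1) S r² ≥ r² D²`, so this is AM–GM.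
-/

lemma div_le_add_sq_div_of_sq_le {S D r s : ℝ} (hS : 0 ≤ S) (hD : 0 ≤ D) (hr : 0 < r)
    (hs : 1 ≤ s) (hCS : D ^ 2 ≤ (s ^ 2 - 1) * S) :
    r / (s + 1) ≤ (S + r ^ 2) / (2 * (r + D)) := by
  have hAMGM : 2 * (r * D) ≤ (s + 1) * S + (s - 1) * r ^ 2 :=
    two_mul_le_add_of_sq_le_mul (by positivity) (by nlinarith) (by nlinarith)
  rw [div_le_div_iff₀ (by linarith) (by positivity)]
  linarith

/-- Let `k ≥ 1` be an integer, `r > 0` real, and `R_1 ≤ R_2 ≤ ⋯ ≤ R_k`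
real numbers. Then
`Σ_{i=1}^{k−1} (R_{i+1} − R_i)² / (2(r + R_k − R_1)) + r² / (2(r + R_k − R_1)) ≥ r/(√k + 1)`. -/
theorem cd_expected_progress_lower_bound
    (k : ℕ) (hk : 1 ≤ k) (r : ℝ) (hr : 0 < r)
    (R : ℕ → ℝ) (hmono : ∀ i, 1 ≤ i → i < k → R i ≤ R (i + 1)) :
    (∑ i ∈ Finset.Ico 1 k, (R (i + 1) - R i) ^ 2) / (2 * (r + R k - R 1)) +
        r ^ 2 / (2 * (r + R k - R 1)) ≥
      r / (Real.sqrt k + 1) := by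
  have htel : ∑ i ∈ Finset.Ico 1 k, (R (i + 1) - R i) = R k - R 1 := Finset.sum_Ico_sub R hk
  have hD : 0 ≤ R k - R 1 := htel ▸ Finset.sum_nonneg fun i hi => by
    rw [Finset.mem_Ico] at hi
    linarith [hmono i hi.1 hi.2]
  have hCS : (R k - R 1) ^ 2 ≤
      (Real.sqrt k ^ 2 - 1) * ∑ i ∈ Finset.Ico 1 k, (R (i + 1) - R i) ^ 2 := by
    have := sq_sum_le_card_mul_sum_sq (s := Finset.Ico 1 k) (f := fun i => R (i + 1) - R i)
    rwa [htel, Nat.card_Ico, Nat.cast_sub hk, Nat.cast_one, ← Real.sq_sqrt (Nat.cast_nonneg k)]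
      at this
  have hs : 1 ≤ Real.sqrt k := Real.one_le_sqrt.mpr (by exact_mod_cast hk)
  rw [ge_iff_le, ← add_div, add_sub_assoc]
  exact div_le_add_sq_div_of_sq_le (Finset.sum_nonneg fun _ _ => sq_nonneg _) hD hr hs hCS
end
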